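/- arXiv:2602.00781 — 8 statements merged into one kernel-verified Lean document; each statement's English description precedes it below -/
import Mathlib

section
/- Consider a two-state finite-horizon MDP under the stochastic dominance assumption. Then the one-step greedy value function coincides with the optimal value function: V^g_h(s) = V*_h(s) for every 0 ≤ h ≤ T+1 and every s ∈ {0,1}. -/
/-!
Write `Δ_h = V^g_h(1) - V^g_h(0)`. Since the state space has two points, every Bellman backup
is `R(s,a) + V(0) + p(a,s,1) (V(1) - V(0))`, so whenever the next value function is
nondecreasing in the state, the action maximizing both `R(s,·)` and `p(·,s,1)` wins the
backup: by backward induction `V^g = V*` as soon as every `Δ_h` is nonnegative. The gaps obey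
`Δ_h = d + (q₁ - q₀) Δ_{h+1}`, with `d = R(1,a*₁) - R(0,a*₀) ≥ 0` and `q_s = p(a*_s,s,1)`, and
the interval `0 ≤ Δ, (1 - q₁) Δ ≤ d` is invariant under this affine map.
-/

open Finset

lemma Finset.sup'_eq_apply_of_forall_le {α ι : Type*} [SemilatticeSup α] {s : Finset ι}
    (H : s.Nonempty) {f : ι → α} {i : ι} (hi : i ∈ s) (hmax : ∀ j ∈ s, f j ≤ f i) :
    s.sup' H f = f i :=
  le_antisymm (sup'_le H f hmax) (le_sup' f hi)

lemma sum_fin_two_mul_eq_of_sum_eq_one {q : Fin 2 → ℝ} (hq : ∑ i, q i = 1) (V : Fin 2 → ℝ) :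
    ∑ i, q i * V i = V 0 + q 1 * (V 1 - V 0) := by
  rw [Fin.sum_univ_two] at hq ⊢
  linear_combination V 0 * hq

lemma affine_step_mapsTo_gap_bound {b c d x : ℝ} (hb₀ : 0 ≤ b) (hb₁ : b ≤ 1) (hc₀ : 0 ≤ c)
    (hc₁ : c ≤ 1) (hx : 0 ≤ x) (hxd : (1 - b) * x ≤ d) :
    0 ≤ d + (b - c) * x ∧ (1 - b) * (d + (b - c) * x) ≤ d := by
  constructor
  · nlinarith [mul_nonneg (sub_nonneg.2 hc₁) hx]
  · nlinarith [mul_nonneg hb₀ (sub_nonneg.2 hxd), mul_nonneg (mul_nonneg (sub_nonneg.2 hb₁) hc₀) hx]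

lemma nonneg_of_backward_affine_recursion {x : ℕ → ℝ} {b c d : ℝ} {T : ℕ} (hb₀ : 0 ≤ b)
    (hb₁ : b ≤ 1) (hc₀ : 0 ≤ c) (hc₁ : c ≤ 1) (hd : 0 ≤ d) (htop : x (T + 1) = 0)
    (hrec : ∀ h ≤ T, x h = d + (b - c) * x (h + 1)) :
    ∀ h ≤ T + 1, 0 ≤ x h := by
  suffices ∀ h ≤ T + 1, 0 ≤ x h ∧ (1 - b) * x h ≤ d from fun h hh ↦ (this h hh).1
  intro h hh
  induction hh using Nat.decreasingInduction with
  | self => simp [htop, hd]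
  | of_succ k hk ih =>
    rw [hrec k (by omega)]
    exact affine_step_mapsTo_gap_bound hb₀ hb₁ hc₀ hc₁ ih.1 ih.2

lemma bellman_sup'_eq_of_dominating_action {A : Type} [Fintype A] [Nonempty A]
    {p : A → Fin 2 → ℝ} (hp : ∀ a, ∑ s', p a s' = 1) {r : A → ℝ}
    {V : Fin 2 → ℝ} {a₀ : A} (hr : ∀ a, r a ≤ r a₀) (hp₁ : ∀ a, p a 1 ≤ p a₀ 1)
    (hV : V 0 ≤ V 1) :
    univ.sup' univ_nonempty (fun a ↦ r a + ∑ s', p a s' * V s') = r a₀ + ∑ s', p a₀ s' * V s' := by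
  refine sup'_eq_apply_of_forall_le _ (mem_univ a₀) fun a _ ↦ ?_
  simp only [sum_fin_two_mul_eq_of_sum_eq_one (hp _)]
  nlinarith [hr a, hp₁ a, sub_nonneg.2 hV]

/-- In a two-state finite-horizon MDP under the stochastic dominance
assumption, the one-step greedy value function coincides with the optimal value
function: `V^g_h(s) = V*_h(s)` for every `0 ≤ h ≤ T+1` and every `s ∈ {0,1}`. -/
theorem greedy_eq_optimal_two_state
    {A : Type} [Fintype A] [Nonempty A]
    (p : A → Fin 2 → Fin 2 → ℝ) (R : Fin 2 → A → ℝ)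
    (hp_nonneg : ∀ a s s', 0 ≤ p a s s')
    (hp_sum : ∀ a s, ∑ s', p a s s' = 1)
    (T : ℕ)
    (Vstar : ℕ → Fin 2 → ℝ) (Qstar : ℕ → Fin 2 → A → ℝ) (Vg : ℕ → Fin 2 → ℝ)
    (astar : Fin 2 → A)
    -- `a*_s` is a one-step greedy action: a maximizer of `R(s,·)`
    (hastar : ∀ s a, R s a ≤ R s (astar s))
    -- optimal value functions, by backward recursion
    (hVstar_top : ∀ s, Vstar (T + 1) s = 0)
    (hQstar : ∀ h ≤ T, ∀ s a, Qstar h s a = R s a + ∑ s', p a s s' * Vstar (h + 1) s')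
    (hVstar : ∀ h ≤ T, ∀ s,
      Vstar h s = Finset.univ.sup' Finset.univ_nonempty (fun a => Qstar h s a))
    -- greedy value function, by backward recursion
    (hVg_top : ∀ s, Vg (T + 1) s = 0)
    (hVg : ∀ h ≤ T, ∀ s,
      Vg h s = R s (astar s) + ∑ s', p (astar s) s s' * Vg (h + 1) s')
    -- stochastic dominance assumption
    (hdom_reward : Finset.univ.sup' Finset.univ_nonempty (fun a => R 0 a)
      ≤ Finset.univ.sup' Finset.univ_nonempty (fun a => R 1 a))
    (hdom_trans : ∀ s a, p a s 1 ≤ p (astar s) s 1) :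
    ∀ h ≤ T + 1, ∀ s, Vg h s = Vstar h s := by
  have hp_le_one (a s) : p a s 1 ≤ 1 := by
    linarith [hp_nonneg a s 0, Fin.sum_univ_two (p a s) ▸ hp_sum a s]
  have hd : 0 ≤ R 1 (astar 1) - R 0 (astar 0) := by
    simp only [sup'_eq_apply_of_forall_le _ (mem_univ _) fun a _ ↦ hastar _ a] at hdom_reward
    linarith
  have hgap : ∀ h ≤ T + 1, Vg h 0 ≤ Vg h 1 := fun h hh ↦ sub_nonneg.1 <|
    nonneg_of_backward_affine_recursion (x := fun h ↦ Vg h 1 - Vg h 0)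
      (hp_nonneg _ 1 1) (hp_le_one _ 1) (hp_nonneg _ 0 1) (hp_le_one _ 0) hd
      (by simp [hVg_top])
      (fun h hh ↦ by
        simp only [hVg h hh, sum_fin_two_mul_eq_of_sum_eq_one (hp_sum _ _)]
        ring) h hh
  intro h hh
  induction hh using Nat.decreasingInduction with
  | self => simp [hVg_top, hVstar_top]
  | of_succ k hk ih =>
    intro s
    have hk' : k ≤ T := by omega
    simp only [hVstar k hk', hQstar k hk', hVg k hk', ← funext ih]
    exact (bellman_sup'_eq_of_dominating_action (hp_sum · s) (hastar s) (hdom_trans s)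
      (hgap _ hk)).symm
end

section
/- Consider a two-state finite-horizon MDP under the stochastic dominance assumption, and assume in addition that for every 0 ≤ h ≤ T and every s ∈ {0,1} the maximizer of a ↦ Q*_h(s,a) over A is unique. Then for every K ≥ 1, every s ∈ {0,1}, the greedy action a*_s is the unique maximizer of a ↦ r^K(s,a); consequently, for every K ≥ 1 the K-step lookahead greedy value function equals the optimal value function: V^{K,g}_h(s) = V*_h(s) for all 0 ≤ h ≤ T+1 and all s. -/
/-!
Write `Δₖ = r^k(1, a*₁) - r^k(0, a*₀)` and `c = p(a*₁,1,1) - p(a*₀,0,1) ∈ [-1, 1]`.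
With two states, `r^{k+1}(s,a) = R(s,a) + max r^k(0,·) + p(a,s,1) · (max r^k(1,·) - max r^k(0,·))`,
so as long as the greedy actions maximize `r^k` and `Δₖ ≥ 0`, stochastic dominance makes them
maximize `r^{k+1}` too, and `Δₖ₊₁ = Δ₁ + c Δₖ`. Hence `Δₖ = Δ₁ (1 + c + ⋯ + c^{k-1}) ≥ 0` for all `k`,
and the induction never breaks. Any maximizer of `r^k(s,·)` then also maximizes `R(s,·) = Q*_T(s,·)`,
so it is `a*_s`. Finally `Q*_h = r^{T-h+1}`, so the lookahead policy picks `a*_s` at every step,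
and it is optimal.
-/

open Finset

lemma Finset.sup'_univ_eq_of_forall_le {ι α : Type*} [Fintype ι] [Nonempty ι] [SemilatticeSup α]
    {f : ι → α} {i : ι} (h : ∀ j, f j ≤ f i) : univ.sup' univ_nonempty f = f i :=
  le_antisymm (sup'_le _ _ fun j _ => h j) (le_sup' f (mem_univ i))

lemma Fin.sum_two_mul_eq_of_sum_eq_one {R : Type*} [CommRing R] {q : Fin 2 → R}
    (hq : ∑ i, q i = 1) (f : Fin 2 → R) : ∑ i, q i * f i = f 0 + q 1 * (f 1 - f 0) := by
  rw [Fin.sum_univ_two] at hq ⊢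
  linear_combination f 0 * hq

lemma geom_sum_nonneg_of_neg_one_le {R : Type*} [Ring R] [LinearOrder R] [IsStrictOrderedRing R]
    {x : R} (hx : -1 ≤ x) (n : ℕ) : 0 ≤ ∑ i ∈ range n, x ^ i := by
  rcases hx.eq_or_lt with rfl | hx
  · rw [neg_one_geom_sum]
    split_ifs <;> norm_num
  · rcases eq_or_ne n 0 with rfl | hn
    · simp
    · exact (geom_sum_pos' (neg_lt_iff_pos_add.mp hx) hn).le

namespace TwoStateMDP

lemma neg_one_le_transition_sub {A : Type} {p : A → Fin 2 → Fin 2 → ℝ}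
    (hp_nonneg : ∀ a s s', 0 ≤ p a s s') (hp_sum : ∀ a s, ∑ s', p a s s' = 1)
    (a b : A) (s t : Fin 2) : -1 ≤ p a s 1 - p b t 1 := by
  have hle : p b t 1 ≤ 1 :=
    hp_sum b t ▸ single_le_sum (fun i _ => hp_nonneg b t i) (mem_univ 1)
  linarith [hp_nonneg a s 1]

variable {A : Type} [Fintype A] [Nonempty A] {p : A → Fin 2 → Fin 2 → ℝ} {R : Fin 2 → A → ℝ}
  {r : ℕ → Fin 2 → A → ℝ} {astar : Fin 2 → A}

lemma lookahead_succ_eq (hp_sum : ∀ a s, ∑ s', p a s s' = 1)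
    (hr_succ : ∀ k, 1 ≤ k → ∀ s a,
      r (k + 1) s a = R s a +
        ∑ s', p a s s' * univ.sup' univ_nonempty (fun a' => r k s' a'))
    {k : ℕ} (hk : 1 ≤ k) (hmax : ∀ s a, r k s a ≤ r k s (astar s)) (s : Fin 2) (a : A) :
    r (k + 1) s a =
      R s a + r k 0 (astar 0) + p a s 1 * (r k 1 (astar 1) - r k 0 (astar 0)) := by
  simp only [hr_succ k hk, sup'_univ_eq_of_forall_le (hmax _),
    Fin.sum_two_mul_eq_of_sum_eq_one (hp_sum a s)]
  ring

lemma lookahead_succ_sub_le (hp_sum : ∀ a s, ∑ s', p a s s' = 1)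
    (hr_succ : ∀ k, 1 ≤ k → ∀ s a,
      r (k + 1) s a = R s a +
        ∑ s', p a s s' * univ.sup' univ_nonempty (fun a' => r k s' a'))
    (hdom_trans : ∀ s a, p a s 1 ≤ p (astar s) s 1)
    {k : ℕ} (hk : 1 ≤ k) (hmax : ∀ s a, r k s a ≤ r k s (astar s))
    (hgap : r k 0 (astar 0) ≤ r k 1 (astar 1)) (s : Fin 2) (a : A) :
    r (k + 1) s a - r (k + 1) s (astar s) ≤ R s a - R s (astar s) := by
  rw [lookahead_succ_eq hp_sum hr_succ hk hmax, lookahead_succ_eq hp_sum hr_succ hk hmax]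
  nlinarith [hdom_trans s a]

lemma lookahead_max_and_gap_eq (hp_nonneg : ∀ a s s', 0 ≤ p a s s')
    (hp_sum : ∀ a s, ∑ s', p a s s' = 1) (hastar : ∀ s a, R s a ≤ R s (astar s))
    (hr_one : ∀ s a, r 1 s a = R s a)
    (hr_succ : ∀ k, 1 ≤ k → ∀ s a,
      r (k + 1) s a = R s a +
        ∑ s', p a s s' * univ.sup' univ_nonempty (fun a' => r k s' a'))
    (hdom_reward : R 0 (astar 0) ≤ R 1 (astar 1))
    (hdom_trans : ∀ s a, p a s 1 ≤ p (astar s) s 1) {k : ℕ} (hk : 1 ≤ k) :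
    (∀ s a, r k s a ≤ r k s (astar s)) ∧
      r k 1 (astar 1) - r k 0 (astar 0) = (R 1 (astar 1) - R 0 (astar 0)) *
        ∑ i ∈ range k, (p (astar 1) 1 1 - p (astar 0) 0 1) ^ i := by
  have hc := neg_one_le_transition_sub hp_nonneg hp_sum (astar 1) (astar 0) 1 0
  induction k, hk using Nat.le_induction with
  | base => simp [hr_one, hastar]
  | succ k hk ih =>
    obtain ⟨hmax, hgap⟩ := ih
    have hgap_nonneg : r k 0 (astar 0) ≤ r k 1 (astar 1) := by
      have := mul_nonneg (sub_nonneg.mpr hdom_reward) (geom_sum_nonneg_of_neg_one_le hc k)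
      linarith
    refine ⟨fun s a => ?_, ?_⟩
    · linarith [lookahead_succ_sub_le hp_sum hr_succ hdom_trans hk hmax hgap_nonneg s a,
        hastar s a]
    · rw [lookahead_succ_eq hp_sum hr_succ hk hmax, lookahead_succ_eq hp_sum hr_succ hk hmax,
        geom_sum_succ, hgap]
      ring

lemma lookahead_max_and_gap_nonneg (hp_nonneg : ∀ a s s', 0 ≤ p a s s')
    (hp_sum : ∀ a s, ∑ s', p a s s' = 1) (hastar : ∀ s a, R s a ≤ R s (astar s))
    (hr_one : ∀ s a, r 1 s a = R s a)
    (hr_succ : ∀ k, 1 ≤ k → ∀ s a,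
      r (k + 1) s a = R s a +
        ∑ s', p a s s' * univ.sup' univ_nonempty (fun a' => r k s' a'))
    (hdom_reward : R 0 (astar 0) ≤ R 1 (astar 1))
    (hdom_trans : ∀ s a, p a s 1 ≤ p (astar s) s 1) {k : ℕ} (hk : 1 ≤ k) :
    (∀ s a, r k s a ≤ r k s (astar s)) ∧ r k 0 (astar 0) ≤ r k 1 (astar 1) := by
  obtain ⟨hmax, hgap⟩ :=
    lookahead_max_and_gap_eq hp_nonneg hp_sum hastar hr_one hr_succ hdom_reward hdom_trans hk
  refine ⟨hmax, sub_nonneg.mp (hgap ▸ mul_nonneg (sub_nonneg.mpr hdom_reward) ?_)⟩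
  exact geom_sum_nonneg_of_neg_one_le
    (neg_one_le_transition_sub hp_nonneg hp_sum (astar 1) (astar 0) 1 0) k

lemma eq_astar_of_lookahead_max (hp_nonneg : ∀ a s s', 0 ≤ p a s s')
    (hp_sum : ∀ a s, ∑ s', p a s s' = 1) (hastar : ∀ s a, R s a ≤ R s (astar s))
    (hr_one : ∀ s a, r 1 s a = R s a)
    (hr_succ : ∀ k, 1 ≤ k → ∀ s a,
      r (k + 1) s a = R s a +
        ∑ s', p a s s' * univ.sup' univ_nonempty (fun a' => r k s' a'))
    (hdom_reward : R 0 (astar 0) ≤ R 1 (astar 1))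
    (hdom_trans : ∀ s a, p a s 1 ≤ p (astar s) s 1)
    (hR_uniq : ∀ s a, (∀ a', R s a' ≤ R s a) → a = astar s)
    {K : ℕ} (hK : 1 ≤ K) {s : Fin 2} {a : A} (ha : ∀ a', r K s a' ≤ r K s a) : a = astar s := by
  refine hR_uniq s a fun a' => ?_
  rcases hK.eq_or_lt with rfl | hK
  · simpa only [hr_one] using ha a'
  · obtain ⟨k, hk, rfl⟩ : ∃ k, 1 ≤ k ∧ K = k + 1 := ⟨K - 1, by omega, by omega⟩
    obtain ⟨hmax, hgap_nonneg⟩ :=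
      lookahead_max_and_gap_nonneg hp_nonneg hp_sum hastar hr_one hr_succ hdom_reward hdom_trans hk
    linarith [hastar s a', ha (astar s),
      lookahead_succ_sub_le hp_sum hr_succ hdom_trans hk hmax hgap_nonneg s a]

lemma Qstar_eq_lookahead {T : ℕ} {Vstar : ℕ → Fin 2 → ℝ} {Qstar : ℕ → Fin 2 → A → ℝ}
    (hVstar_top : ∀ s, Vstar (T + 1) s = 0)
    (hQstar : ∀ h ≤ T, ∀ s a, Qstar h s a = R s a + ∑ s', p a s s' * Vstar (h + 1) s')
    (hVstar : ∀ h ≤ T, ∀ s,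
      Vstar h s = univ.sup' univ_nonempty (fun a => Qstar h s a))
    (hr_one : ∀ s a, r 1 s a = R s a)
    (hr_succ : ∀ k, 1 ≤ k → ∀ s a,
      r (k + 1) s a = R s a +
        ∑ s', p a s s' * univ.sup' univ_nonempty (fun a' => r k s' a'))
    : ∀ h ≤ T, ∀ s a, Qstar h s a = r (T - h + 1) s a := by
  intro h hh
  induction hh using Nat.decreasingInduction with
  | self => simp [hQstar T le_rfl, hVstar_top, hr_one]
  | of_succ h hh ih =>
    intro s a
    rw [hQstar h hh.le, show T - h + 1 = T - (h + 1) + 1 + 1 by omega, hr_succ _ le_add_self]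
    simp only [hVstar (h + 1) hh, ih]

end TwoStateMDP

/-- In a two-state finite-horizon MDP under the stochastic dominance
assumption, if moreover for every `0 ≤ h ≤ T` and `s ∈ {0,1}` the maximizer of
`a ↦ Q*_h(s,a)` is unique, then for every `K ≥ 1` and every `s`, the greedy action
`a*_s` is the unique maximizer of `a ↦ r^K(s,a)`; consequently, for every `K ≥ 1`
the K-step lookahead greedy value function equals the optimal value function. -/
theorem k_step_greedy_optimal_two_state
    {A : Type} [Fintype A] [Nonempty A]
    (p : A → Fin 2 → Fin 2 → ℝ) (R : Fin 2 → A → ℝ)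
    (hp_nonneg : ∀ a s s', 0 ≤ p a s s')
    (hp_sum : ∀ a s, ∑ s', p a s s' = 1)
    (T : ℕ)
    (Vstar : ℕ → Fin 2 → ℝ) (Qstar : ℕ → Fin 2 → A → ℝ) (r : ℕ → Fin 2 → A → ℝ)
    (astar : Fin 2 → A)
    -- `a*_s` is a one-step greedy action: a maximizer of `R(s,·)`
    (hastar : ∀ s a, R s a ≤ R s (astar s))
    -- optimal value functions, by backward recursion
    (hVstar_top : ∀ s, Vstar (T + 1) s = 0)
    (hQstar : ∀ h ≤ T, ∀ s a, Qstar h s a = R s a + ∑ s', p a s s' * Vstar (h + 1) s')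
    (hVstar : ∀ h ≤ T, ∀ s,
      Vstar h s = Finset.univ.sup' Finset.univ_nonempty (fun a => Qstar h s a))
    -- K-step lookahead reward, by recursion
    (hr_one : ∀ s a, r 1 s a = R s a)
    (hr_succ : ∀ k, 1 ≤ k → ∀ s a,
      r (k + 1) s a = R s a +
        ∑ s', p a s s' * Finset.univ.sup' Finset.univ_nonempty (fun a' => r k s' a'))
    -- stochastic dominance assumption
    (hdom_reward : Finset.univ.sup' Finset.univ_nonempty (fun a => R 0 a)
      ≤ Finset.univ.sup' Finset.univ_nonempty (fun a => R 1 a))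
    (hdom_trans : ∀ s a, p a s 1 ≤ p (astar s) s 1)
    -- uniqueness of the maximizer of `a ↦ Q*_h(s,a)` for every `h ≤ T`, `s`
    (huniq : ∀ h ≤ T, ∀ s, ∃! a : A, ∀ a', Qstar h s a' ≤ Qstar h s a) :
    -- (1) `a*_s` is the unique maximizer of `a ↦ r^K(s,a)` for every `K ≥ 1`
    (∀ K, 1 ≤ K → ∀ s,
      (∀ a, r K s a ≤ r K s (astar s)) ∧
      (∀ a : A, (∀ a', r K s a' ≤ r K s a) → a = astar s)) ∧
    -- (2) every K-step lookahead greedy value function equals the optimal one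
    (∀ K, 1 ≤ K → ∀ (b : ℕ → Fin 2 → A) (VKg : ℕ → Fin 2 → ℝ),
      (∀ h ≤ T, ∀ s a,
        r (min (T - h + 1) K) s a ≤ r (min (T - h + 1) K) s (b h s)) →
      (∀ s, VKg (T + 1) s = 0) →
      (∀ h ≤ T, ∀ s,
        VKg h s = R s (b h s) + ∑ s', p (b h s) s s' * VKg (h + 1) s') →
      ∀ h ≤ T + 1, ∀ s, VKg h s = Vstar h s) := by
  open TwoStateMDP in
  have hR_gap : R 0 (astar 0) ≤ R 1 (astar 1) := by
    simpa only [Finset.sup'_univ_eq_of_forall_le (hastar _)] using hdom_reward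
  have hQr := Qstar_eq_lookahead hVstar_top hQstar hVstar hr_one hr_succ
  have hR_uniq : ∀ s a, (∀ a', R s a' ≤ R s a) → a = astar s := fun s a ha =>
    (huniq T le_rfl s).unique (by simpa [hQr T le_rfl, hr_one] using ha)
      (by simpa [hQr T le_rfl, hr_one] using hastar s)
  have hmax K (hK : 1 ≤ K) := (lookahead_max_and_gap_nonneg hp_nonneg hp_sum hastar hr_one
    hr_succ hR_gap hdom_trans hK).1
  have hgreedy K (hK : 1 ≤ K) s (a : A) (ha : ∀ a', r K s a' ≤ r K s a) :=
    eq_astar_of_lookahead_max hp_nonneg hp_sum hastar hr_one hr_succ hR_gap hdom_trans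
      hR_uniq hK ha
  refine ⟨fun K hK s => ⟨hmax K hK s, hgreedy K hK s⟩, fun K hK b VKg hb hVKg_top hVKg => ?_⟩
  intro h hh
  induction hh using Nat.decreasingInduction with
  | self => simp [hVKg_top, hVstar_top]
  | of_succ h hh ih =>
    have hhT : h ≤ T := Nat.le_of_lt_succ hh
    intro s
    have hVQ : Vstar h s = Qstar h s (astar s) := by
      rw [hVstar h hhT, Finset.sup'_univ_eq_of_forall_le]
      simpa only [hQr h hhT] using hmax _ le_add_self s
    rw [hVKg h hhT, hgreedy _ (by omega) s _ (hb h hhT s), hVQ, hQstar h hhT]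
    simp only [ih]
end

section
/- Consider a two-state finite-horizon MDP in which R(1,a*_1) ≥ R(0,a*_0) and p a*_1 1 1 ≤ p a*_0 0 1. Then for every 0 ≤ k ≤ T+1 the greedy value difference is sandwiched: 0 ≤ V^g_k(1) − V^g_k(0) ≤ R(1,a*_1) − R(0,a*_0). -/
/-! The difference `d_k = V^g_k(1) − V^g_k(0)` obeys the backward recursion
`d_k = r + c · d_{k+1}` with `r = R(1,a*_1) − R(0,a*_0) ≥ 0` and
`c = p a*_1 1 1 − p a*_0 0 1 ∈ [−1, 0]`, and `x ↦ r + c x` maps `[0, r]` into itself. -/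

open Finset

theorem add_mul_mem_Icc {r c x : ℝ} (hc₁ : -1 ≤ c) (hc₀ : c ≤ 0) (hx : x ∈ Set.Icc 0 r) :
    r + c * x ∈ Set.Icc 0 r := by
  obtain ⟨hx₀, hxr⟩ := hx
  constructor <;> nlinarith

theorem mem_Icc_of_backward_recursion {r c : ℝ} {d : ℕ → ℝ} {n : ℕ}
    (hr : 0 ≤ r) (hc₁ : -1 ≤ c) (hc₀ : c ≤ 0)
    (hd_top : d n = 0) (hd : ∀ k < n, d k = r + c * d (k + 1)) :
    ∀ k ≤ n, d k ∈ Set.Icc 0 r := fun _ hk =>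
  Nat.decreasingInduction (motive := fun k _ => d k ∈ Set.Icc 0 r)
    (fun k hk ih => hd k hk ▸ add_mul_mem_Icc hc₁ hc₀ ih)
    (by simp [hd_top, hr]) hk

theorem Fin.sum_two_mul_sub_sum_two_mul {q q' V : Fin 2 → ℝ}
    (hq : ∑ i, q i = 1) (hq' : ∑ i, q' i = 1) :
    ∑ i, q i * V i - ∑ i, q' i * V i = (q 1 - q' 1) * (V 1 - V 0) := by
  simp only [Fin.sum_univ_two] at *
  linear_combination V 0 * (hq - hq')

theorem le_one_of_sum_eq_one {ι : Type*} [Fintype ι] {q : ι → ℝ}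
    (hq_nonneg : ∀ i, 0 ≤ q i) (hq : ∑ i, q i = 1) (i : ι) : q i ≤ 1 :=
  hq ▸ single_le_sum (fun j _ => hq_nonneg j) (mem_univ i)

theorem greedy_value_difference_sandwich_two_state_general
    {A : Type}
    (p : A → Fin 2 → Fin 2 → ℝ) (R : Fin 2 → A → ℝ)
    (hp_nonneg : ∀ a s s', 0 ≤ p a s s')
    (hp_sum : ∀ a s, ∑ s', p a s s' = 1)
    (T : ℕ)
    (Vg : ℕ → Fin 2 → ℝ)
    (astar : Fin 2 → A)
    -- greedy value function, by backward recursion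
    (hVg_top : ∀ s, Vg (T + 1) s = 0)
    (hVg : ∀ h ≤ T, ∀ s,
      Vg h s = R s (astar s) + ∑ s', p (astar s) s s' * Vg (h + 1) s')
    -- assumptions of the statement
    (hR : R 0 (astar 0) ≤ R 1 (astar 1))
    (hcase : p (astar 1) 1 1 ≤ p (astar 0) 0 1) :
    ∀ k ≤ T + 1, 0 ≤ Vg k 1 - Vg k 0 ∧ Vg k 1 - Vg k 0 ≤ R 1 (astar 1) - R 0 (astar 0) := by
  have hc₁ : -1 ≤ p (astar 1) 1 1 - p (astar 0) 0 1 := by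
    linarith [hp_nonneg (astar 1) 1 1, le_one_of_sum_eq_one (hp_nonneg (astar 0) 0) (hp_sum _ _) 1]
  have hd : ∀ k < T + 1, Vg k 1 - Vg k 0 = (R 1 (astar 1) - R 0 (astar 0)) +
      (p (astar 1) 1 1 - p (astar 0) 0 1) * (Vg (k + 1) 1 - Vg (k + 1) 0) := fun k hk => by
    rw [hVg k (Nat.lt_succ_iff.mp hk) 1, hVg k (Nat.lt_succ_iff.mp hk) 0,
      ← Fin.sum_two_mul_sub_sum_two_mul (hp_sum (astar 1) 1) (hp_sum (astar 0) 0)]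
    ring
  exact mem_Icc_of_backward_recursion (sub_nonneg.mpr hR) hc₁ (sub_nonpos.mpr hcase)
    (by simp [hVg_top]) hd

/-- In a two-state finite-horizon MDP in which `R(1,a*_1) ≥ R(0,a*_0)`
and `p a*_1 1 1 ≤ p a*_0 0 1`, the greedy value difference is sandwiched:
`0 ≤ V^g_k(1) − V^g_k(0) ≤ R(1,a*_1) − R(0,a*_0)` for every `0 ≤ k ≤ T+1`. -/
theorem greedy_value_difference_sandwich_two_state
    {A : Type} [Fintype A] [Nonempty A]
    (p : A → Fin 2 → Fin 2 → ℝ) (R : Fin 2 → A → ℝ)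
    (hp_nonneg : ∀ a s s', 0 ≤ p a s s')
    (hp_sum : ∀ a s, ∑ s', p a s s' = 1)
    (T : ℕ)
    (Vg : ℕ → Fin 2 → ℝ)
    (astar : Fin 2 → A)
    -- `a*_s` is a one-step greedy action: a maximizer of `R(s,·)`
    (hastar : ∀ s a, R s a ≤ R s (astar s))
    -- greedy value function, by backward recursion
    (hVg_top : ∀ s, Vg (T + 1) s = 0)
    (hVg : ∀ h ≤ T, ∀ s,
      Vg h s = R s (astar s) + ∑ s', p (astar s) s s' * Vg (h + 1) s')
    -- assumptions of the statement
    (hR : R 0 (astar 0) ≤ R 1 (astar 1))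
    (hcase : p (astar 1) 1 1 ≤ p (astar 0) 0 1) :
    ∀ k ≤ T + 1, 0 ≤ Vg k 1 - Vg k 0 ∧ Vg k 1 - Vg k 0 ≤ R 1 (astar 1) - R 0 (astar 0) :=
  greedy_value_difference_sandwich_two_state_general p R hp_nonneg hp_sum T Vg astar hVg_top hVg hR
    hcase
end

section
/- Explicit lower-bound instance: let 1 ≤ K ≤ T and consider the MDP with states S = {B, G}, actions A = {a0, a1}, deterministic transitions p a0 B B = 1, p a1 B G = 1, p a0 G G = 1, p a1 G B = 1, and rewards R(B,a0) = −1, R(B,a1) = −(K+1), R(G,a0) = 0, R(G,a1) = −1. Then: (i) the optimal value from B over horizon T is V*_0(B) = −(K+1); (ii) for every number of remaining steps m with 1 ≤ m, a0 is the unique maximizer of a ↦ r^{min(m,K)}(B,a) and of a ↦ r^{min(m,K)}(G,a), so the K-step lookahead greedy value function is uniquely determined and satisfies V^{K,g}_0(B) = −(T+1); consequently (iii) V*_0(B) − V^{K,g}_0(B) = T − K. -/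
/-- Explicit lower-bound instance with states `{B, G} = {0, 1}` and
actions `{a0, a1} = {0, 1}`, deterministic transitions
`p a0 B B = 1, p a1 B G = 1, p a0 G G = 1, p a1 G B = 1`, and rewards
`R(B,a0) = −1, R(B,a1) = −(K+1), R(G,a0) = 0, R(G,a1) = −1`.  Then
(i) `V*_0(B) = −(K+1)`;
(ii) for every number of remaining steps `m ≥ 1`, `a0` is the unique maximizer of
`a ↦ r^{min(m,K)}(s,a)` for both states `s`, so the K-step lookahead greedy value
function is uniquely determined and satisfies `V^{K,g}_0(B) = −(T+1)`;
and consequently (iii) `V*_0(B) − V^{K,g}_0(B) = T − K`. -/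
theorem lower_bound_instance_gap
    (K T : ℕ) (hK : 1 ≤ K) (hKT : K ≤ T)
    (p : Fin 2 → Fin 2 → Fin 2 → ℝ) (R : Fin 2 → Fin 2 → ℝ)
    (hp_nonneg : ∀ a s s', 0 ≤ p a s s')
    (hp_sum : ∀ a s, ∑ s', p a s s' = 1)
    -- deterministic transitions (B = 0, G = 1, a0 = 0, a1 = 1)
    (hpBB : p 0 0 0 = 1) (hpBG : p 1 0 1 = 1) (hpGG : p 0 1 1 = 1) (hpGB : p 1 1 0 = 1)
    -- rewards
    (hRB0 : R 0 0 = -1) (hRB1 : R 0 1 = -(K + 1 : ℝ))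
    (hRG0 : R 1 0 = 0) (hRG1 : R 1 1 = -1)
    (Vstar : ℕ → Fin 2 → ℝ) (Qstar : ℕ → Fin 2 → Fin 2 → ℝ) (r : ℕ → Fin 2 → Fin 2 → ℝ)
    -- optimal value functions, by backward recursion
    (hVstar_top : ∀ s, Vstar (T + 1) s = 0)
    (hQstar : ∀ h ≤ T, ∀ s a, Qstar h s a = R s a + ∑ s', p a s s' * Vstar (h + 1) s')
    (hVstar : ∀ h ≤ T, ∀ s,
      Vstar h s = Finset.univ.sup' Finset.univ_nonempty (fun a => Qstar h s a))
    -- K-step lookahead reward, by recursion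
    (hr_one : ∀ s a, r 1 s a = R s a)
    (hr_succ : ∀ k, 1 ≤ k → ∀ s a,
      r (k + 1) s a = R s a +
        ∑ s', p a s s' * Finset.univ.sup' Finset.univ_nonempty (fun a' => r k s' a')) :
    -- (i) optimal value from `B` over horizon `T`
    Vstar 0 0 = -(K + 1 : ℝ) ∧
    -- (ii) `a0` is the unique maximizer of `a ↦ r^{min(m,K)}(s,a)` for both states
    (∀ m, 1 ≤ m → ∀ s : Fin 2,
      (∀ a, r (min m K) s a ≤ r (min m K) s 0) ∧
      (∀ a : Fin 2, (∀ a', r (min m K) s a' ≤ r (min m K) s a) → a = 0)) ∧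
    -- (ii)+(iii): every K-step lookahead greedy value function satisfies the gap
    (∀ (b : ℕ → Fin 2 → Fin 2) (VKg : ℕ → Fin 2 → ℝ),
      (∀ h ≤ T, ∀ s a,
        r (min (T - h + 1) K) s a ≤ r (min (T - h + 1) K) s (b h s)) →
      (∀ s, VKg (T + 1) s = 0) →
      (∀ h ≤ T, ∀ s,
        VKg h s = R s (b h s) + ∑ s', p (b h s) s s' * VKg (h + 1) s') →
      VKg 0 0 = -(T + 1 : ℝ) ∧ Vstar 0 0 - VKg 0 0 = (T : ℝ) - (K : ℝ)) := by

  -- zero transition entries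
  have h01 : p 0 0 1 = 0 := by have := hp_sum 0 0; rw [Fin.sum_univ_two] at this; linarith
  have h10 : p 1 0 0 = 0 := by have := hp_sum 1 0; rw [Fin.sum_univ_two] at this; linarith
  have h00 : p 0 1 0 = 0 := by have := hp_sum 0 1; rw [Fin.sum_univ_two] at this; linarith
  have h11 : p 1 1 1 = 0 := by have := hp_sum 1 1; rw [Fin.sum_univ_two] at this; linarith
  have hsup : ∀ f : Fin 2 → ℝ,
      Finset.univ.sup' Finset.univ_nonempty f = max (f 0) (f 1) := by
    intro f
    apply le_antisymm
    · apply Finset.sup'_le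
      intro a _
      fin_cases a
      · exact le_max_left _ _
      · exact le_max_right _ _
    · exact max_le (Finset.le_sup' f (Finset.mem_univ 0)) (Finset.le_sup' f (Finset.mem_univ 1))
  -- values of the lookahead reward
  have hrval : ∀ k, 1 ≤ k → k ≤ K →
      (r k 0 0 = -(k : ℝ) ∧ r k 0 1 = -((K : ℝ) + 1) ∧ r k 1 0 = 0 ∧ r k 1 1 = -(k : ℝ)) := by
    intro k hk
    induction k, hk using Nat.le_induction with
    | base =>
      intro _
      refine ⟨?_, ?_, ?_, ?_⟩ <;> simp [hr_one, hRB0, hRB1, hRG0, hRG1]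
    | succ k hk ih =>
      intro hkK
      obtain ⟨i1, i2, i3, i4⟩ := ih (by omega)
      have hkKR : (k : ℝ) ≤ (K : ℝ) + 1 := by
        have : (k : ℝ) ≤ (K : ℝ) := by exact_mod_cast (by omega : k ≤ K)
        linarith
      have hMB : Finset.univ.sup' Finset.univ_nonempty (fun a' => r k 0 a') = -(k : ℝ) := by
        rw [hsup]; simp only [i1, i2]
        rw [max_eq_left (by linarith)]
      have hMG : Finset.univ.sup' Finset.univ_nonempty (fun a' => r k 1 a') = 0 := by
        rw [hsup]; simp only [i3, i4]
        rw [max_eq_left (neg_nonpos.mpr (Nat.cast_nonneg k))]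
      refine ⟨?_, ?_, ?_, ?_⟩
      · rw [hr_succ k hk, Fin.sum_univ_two, hMB, hMG, hRB0, hpBB, h01]
        push_cast; ring
      · rw [hr_succ k hk, Fin.sum_univ_two, hMB, hMG, hRB1, hpBG, h10]
        ring
      · rw [hr_succ k hk, Fin.sum_univ_two, hMB, hMG, hRG0, hpGG, h00]
        ring
      · rw [hr_succ k hk, Fin.sum_univ_two, hMB, hMG, hRG1, hpGB, h11]
        push_cast; ring
  -- part (ii)
  have part2 : ∀ m, 1 ≤ m → ∀ s : Fin 2,
      (∀ a, r (min m K) s a ≤ r (min m K) s 0) ∧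
      (∀ a : Fin 2, (∀ a', r (min m K) s a' ≤ r (min m K) s a) → a = 0) := by
    intro m hm s
    obtain ⟨i1, i2, i3, i4⟩ := hrval (min m K) (by omega) (by omega)
    have hkK : ((min m K : ℕ) : ℝ) ≤ (K : ℝ) := Nat.cast_le.mpr (min_le_right m K)
    have hk1 : (1 : ℝ) ≤ ((min m K : ℕ) : ℝ) := Nat.one_le_cast.mpr (by omega)
    have hcases : ∀ a : Fin 2, a = 0 ∨ a = 1 := by decide
    rcases hcases s with hs | hs <;> subst hs
    · constructor
      · intro a
        rcases hcases a with ha | ha <;> subst ha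
        · exact le_refl _
        · rw [i1, i2]; linarith
      · intro a ha
        rcases hcases a with h | h
        · exact h
        · exfalso
          have := ha 0
          rw [h, i1, i2] at this
          linarith
    · constructor
      · intro a
        rcases hcases a with ha | ha <;> subst ha
        · exact le_refl _
        · rw [i3, i4]; linarith
      · intro a ha
        rcases hcases a with h | h
        · exact h
        · exfalso
          have := ha 0
          rw [h, i3, i4] at this
          linarith
  -- optimal value function
  have hVval : ∀ j, j ≤ T + 1 →
      Vstar (T + 1 - j) 1 = 0 ∧ Vstar (T + 1 - j) 0 = -((min j (K + 1) : ℕ) : ℝ) := by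
    intro j hj
    induction j with
    | zero => simp [hVstar_top]
    | succ j ih =>
      obtain ⟨ih1, ih0⟩ := ih (by omega)
      have hh : T + 1 - (j + 1) = T - j := by omega
      have hh' : T - j + 1 = T + 1 - j := by omega
      have hhT : T - j ≤ T := by omega
      have hQ := hQstar (T - j) hhT
      have hV := hVstar (T - j) hhT
      rw [hh'] at hQ
      have hQ10 : Qstar (T - j) 1 0 = 0 := by
        rw [hQ 1 0, Fin.sum_univ_two, h00, hpGG, ih1, hRG0]; ring
      have hQ11 : Qstar (T - j) 1 1 = -1 + -((min j (K + 1) : ℕ) : ℝ) := by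
        rw [hQ 1 1, Fin.sum_univ_two, h11, hpGB, ih0, hRG1]; ring
      have hQ00 : Qstar (T - j) 0 0 = -1 + -((min j (K + 1) : ℕ) : ℝ) := by
        rw [hQ 0 0, Fin.sum_univ_two, h01, hpBB, ih0, hRB0]; ring
      have hQ01 : Qstar (T - j) 0 1 = -((K : ℝ) + 1) := by
        rw [hQ 0 1, Fin.sum_univ_two, h10, hpBG, ih1, hRB1]; ring
      have hmnn : (0 : ℝ) ≤ ((min j (K + 1) : ℕ) : ℝ) := by positivity
      rw [hh]
      constructor
      · rw [hV 1, hsup]; simp only [hQ10, hQ11]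
        rw [max_eq_left (by linarith)]
      · rw [hV 0, hsup]; simp only [hQ00, hQ01]
        rcases le_or_gt (j + 1) (K + 1) with hc | hc
        · have e1 : min j (K + 1) = j := by omega
          have e2 : min (j + 1) (K + 1) = j + 1 := by omega
          rw [e1, e2]
          have hjK : (j : ℝ) + 1 ≤ (K : ℝ) + 1 := by
            have : (j : ℝ) ≤ (K : ℝ) := by exact_mod_cast (by omega : j ≤ K)
            linarith
          rw [max_eq_left (by push_cast; linarith)]
          push_cast; ring
        · have e1 : min j (K + 1) = K + 1 := by omega
          have e2 : min (j + 1) (K + 1) = K + 1 := by omega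
          rw [e1, e2]
          rw [max_eq_right (by push_cast; linarith)]
          push_cast; ring
  have hV00 : Vstar 0 0 = -((K : ℝ) + 1) := by
    have := (hVval (T + 1) le_rfl).2
    simp only [Nat.sub_self] at this
    rw [this]
    have : min (T + 1) (K + 1) = K + 1 := by omega
    rw [this]; push_cast; ring
  refine ⟨hV00, part2, ?_⟩
  -- greedy part
  intro b VKg hb hVKg_top hVKg
  have hb0 : ∀ h ≤ T, ∀ s, b h s = 0 := by
    intro h hh s
    exact ((part2 (T - h + 1) (by omega) s).2) (b h s) (hb h hh s)
  have hVKval : ∀ j, j ≤ T + 1 →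
      VKg (T + 1 - j) 1 = 0 ∧ VKg (T + 1 - j) 0 = -(j : ℝ) := by
    intro j hj
    induction j with
    | zero => simp [hVKg_top]
    | succ j ih =>
      obtain ⟨ih1, ih0⟩ := ih (by omega)
      have hh : T + 1 - (j + 1) = T - j := by omega
      have hh' : T - j + 1 = T + 1 - j := by omega
      have hhT : T - j ≤ T := by omega
      have hVK := hVKg (T - j) hhT
      rw [hh'] at hVK
      rw [hh]
      constructor
      · rw [hVK 1, hb0 (T - j) hhT 1, Fin.sum_univ_two, h00, hpGG, ih1, hRG0]; ring
      · rw [hVK 0, hb0 (T - j) hhT 0, Fin.sum_univ_two, h01, hpBB, ih0, hRB0]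
        push_cast; ring
  have hVK00 : VKg 0 0 = -((T : ℝ) + 1) := by
    have := (hVKval (T + 1) le_rfl).2
    simp only [Nat.sub_self] at this
    rw [this]; push_cast; ring
  constructor
  · rw [hVK00]
  · rw [hVK00, hV00]; ring
end

section
/- Linear optimality gap of K-step lookahead greedy (Theorem 3.2): for every T, K ∈ ℕ with 1 ≤ K < T and every pair of finite sets S, A with |S| ≥ 2 and |A| ≥ 2, there exist a transition kernel p : A → S → S → ℝ (nonnegative, rows summing to 1), a reward function R : S → A → ℝ taking values in [−(K+1), 0], and a state s ∈ S such that every K-step lookahead greedy value function V^{K,g} (for any choice of maximizing actions) satisfies V*_0(s) − V^{K,g}_0(s) = T − K. In particular, the optimality gap of the K-step lookahead greedy policy can grow linearly in T. -/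
/-!
Take a state `s₀` with two kinds of actions: `a₀` stays at `s₀` at cost `1`, every other action
moves to an absorbing zero-reward state at cost `K + 1`. With `k` decisions left the best one can
do from `s₀` is `-min k (K + 1)`: stay throughout, or leave at once. A lookahead of depth `m ≤ K`
therefore always sees staying (`-m`) as strictly better than leaving (`-(K + 1)`), so the greedy
policy stays for all `T + 1` steps and collects `-(T + 1)`, whereas the optimal value is `-(K + 1)`.
-/

open Finset

lemma sup'_univ_eq_max_of_eq_off {A α : Type*} [Fintype A] [Nonempty A] [LinearOrder α]
    (f : A → α) {a₀ a₁ : A} (ha₁ : a₁ ≠ a₀) {c : α} (hc : ∀ a ≠ a₀, f a = c) :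
    univ.sup' univ_nonempty f = max (f a₀) c := by
  refine le_antisymm (sup'_le _ _ fun a _ => ?_) (max_le (le_sup' f (mem_univ a₀)) ?_)
  · by_cases h : a = a₀
    · exact h ▸ le_max_left _ _
    · exact (hc a h).symm ▸ le_max_right _ _
  · exact hc a₁ ha₁ ▸ le_sup' f (mem_univ a₁)

section DeterministicKernel

variable {S A : Type*} [DecidableEq S]

def detKernel (next : A → S → S) : A → S → S → ℝ :=
  fun a s s' => if s' = next a s then 1 else 0

lemma detKernel_nonneg (next : A → S → S) (a : A) (s s' : S) : 0 ≤ detKernel next a s s' := by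
  unfold detKernel; split_ifs <;> norm_num

variable [Fintype S]

lemma sum_detKernel_mul (next : A → S → S) (a : A) (s : S) (g : S → ℝ) :
    ∑ s', detKernel next a s s' * g s' = g (next a s) := by
  simp [detKernel, ite_mul]

lemma sum_detKernel (next : A → S → S) (a : A) (s : S) : ∑ s', detKernel next a s s' = 1 := by
  simpa using sum_detKernel_mul next a s 1

end DeterministicKernel

section FiniteHorizon

variable {S A : Type*} [Fintype S]

lemma policyValue_eq_of_selfLoop (p : A → S → S → ℝ) (R : S → A → ℝ) {T : ℕ}
    {V : ℕ → S → ℝ} {b : ℕ → S → A} {s : S} {a : A}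
    (hloop : ∀ g : S → ℝ, ∑ s', p a s s' * g s' = g s) (hb : ∀ h ≤ T, b h s = a)
    (hV₀ : V (T + 1) s = 0)
    (hV : ∀ h ≤ T, V h s = R s (b h s) + ∑ s', p (b h s) s s' * V (h + 1) s') :
    ∀ h ≤ T + 1, V h s = ((T + 1 - h : ℕ) : ℝ) * R s a := by
  suffices ∀ j ≤ T + 1, V (T + 1 - j) s = (j : ℝ) * R s a by
    intro h hh
    simpa [Nat.sub_sub_self hh] using this (T + 1 - h) (Nat.sub_le _ _)
  intro j hj
  induction j with
  | zero => simpa using hV₀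
  | succ j ih =>
    have hT : T + 1 - (j + 1) + 1 = T + 1 - j := by omega
    rw [hV _ (by omega), hb _ (by omega), hloop, hT, ih (by omega)]
    push_cast; ring

variable [Fintype A] [Nonempty A]

structure IsLookaheadReward (p : A → S → S → ℝ) (R : S → A → ℝ) (r : ℕ → S → A → ℝ) : Prop where
  one : ∀ s a, r 1 s a = R s a
  succ : ∀ k, 1 ≤ k → ∀ s a,
    r (k + 1) s a = R s a + ∑ s', p a s s' * univ.sup' univ_nonempty (fun a' => r k s' a')

/-- Both sides obey the same Bellman recursion, started from `R`. -/
lemma optimalQ_eq_lookahead {p : A → S → S → ℝ} {R : S → A → ℝ} {r : ℕ → S → A → ℝ}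
    (hr : IsLookaheadReward p R r) {T : ℕ} {Vstar : ℕ → S → ℝ} {Qstar : ℕ → S → A → ℝ}
    (hV₀ : ∀ s, Vstar (T + 1) s = 0)
    (hQ : ∀ h ≤ T, ∀ s a, Qstar h s a = R s a + ∑ s', p a s s' * Vstar (h + 1) s')
    (hV : ∀ h ≤ T, ∀ s, Vstar h s = univ.sup' univ_nonempty (fun a => Qstar h s a)) :
    ∀ h ≤ T, Qstar h = r (T - h + 1) := by
  suffices ∀ j ≤ T, Qstar (T - j) = r (j + 1) by
    intro h hh
    simpa [Nat.sub_sub_self hh] using this (T - h) (Nat.sub_le _ _)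
  intro j hj
  induction j with
  | zero =>
    funext s a
    simp [hQ T le_rfl, hV₀, hr.one]
  | succ j ih =>
    funext s a
    have hT : T - (j + 1) + 1 = T - j := by omega
    rw [hQ _ (by omega), hr.succ (j + 1) (by omega), hT]
    simp only [hV (T - j) (Nat.sub_le _ _), ih (by omega)]

end FiniteHorizon

namespace StayOrExit

variable {S A : Type*} [DecidableEq S] [DecidableEq A] (s₀ s₁ : S) (a₀ : A) (K : ℕ)

def next (a : A) (s : S) : S := if a = a₀ then s else s₁

def kernel : A → S → S → ℝ := detKernel (next s₁ a₀)

def reward (s : S) (a : A) : ℝ := if s = s₀ then (if a = a₀ then -1 else -(K + 1)) else 0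

lemma reward_mem_Icc (s : S) (a : A) : reward s₀ a₀ K s a ∈ Set.Icc (-(K + 1 : ℝ)) 0 := by
  unfold reward
  split_ifs <;> constructor <;> linarith [(Nat.cast_nonneg K : (0 : ℝ) ≤ K)]

variable [Fintype S]

lemma sum_kernel_mul (a : A) (s : S) (g : S → ℝ) :
    ∑ s', kernel s₁ a₀ a s s' * g s' = g (if a = a₀ then s else s₁) :=
  sum_detKernel_mul _ a s g

lemma sum_kernel_stay_mul (s : S) (g : S → ℝ) : ∑ s', kernel s₁ a₀ a₀ s s' * g s' = g s := by
  simp [sum_kernel_mul]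

variable [Fintype A] [Nonempty A] {s₀ s₁ a₀ K} {r : ℕ → S → A → ℝ}

lemma lookahead_of_ne (hr : IsLookaheadReward (kernel s₁ a₀) (reward s₀ a₀ K) r)
    (hs₁ : s₁ ≠ s₀) {k : ℕ} (hk : 1 ≤ k) : ∀ s ≠ s₀, r k s = 0 := by
  induction k, hk using Nat.le_induction with
  | base => intro s hs; funext a; simp [hr.one, reward, hs]
  | succ k hk ih =>
    have hsup : ∀ s ≠ s₀, univ.sup' univ_nonempty (fun a' => r k s a') = 0 := fun s hs => by
      simp [ih s hs]
    intro s hs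
    funext a
    rw [hr.succ k hk, sum_kernel_mul]
    split_ifs <;> simp_all [reward]

lemma lookahead_exit (hr : IsLookaheadReward (kernel s₁ a₀) (reward s₀ a₀ K) r)
    (hs₁ : s₁ ≠ s₀) {k : ℕ} (hk : 1 ≤ k) {a : A} (ha : a ≠ a₀) :
    r k s₀ a = -(K + 1) := by
  obtain ⟨k, rfl⟩ := Nat.exists_eq_add_of_le' hk
  cases k with
  | zero => simp [hr.one, reward, ha]
  | succ k =>
    rw [hr.succ (k + 1) (by omega), sum_kernel_mul, if_neg ha,
      lookahead_of_ne hr hs₁ (by omega) s₁ hs₁]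
    simp [reward, ha]

/-- The cap `K + 2` is the cost of staying once and then leaving. -/
lemma lookahead_stay (hr : IsLookaheadReward (kernel s₁ a₀) (reward s₀ a₀ K) r)
    (hs₁ : s₁ ≠ s₀) {a₁ : A} (ha₁ : a₁ ≠ a₀) {k : ℕ} (hk : 1 ≤ k) :
    r k s₀ a₀ = -(min k (K + 2) : ℕ) := by
  induction k, hk using Nat.le_induction with
  | base => simp [hr.one, reward]
  | succ k hk ih =>
    rw [hr.succ k hk, sum_kernel_mul, if_pos rfl,
      sup'_univ_eq_max_of_eq_off _ ha₁ fun a ha => lookahead_exit hr hs₁ hk ha, ih]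
    simp only [reward]
    rcases le_or_gt k (K + 1) with hkK | hkK
    · have : (k : ℝ) ≤ K + 1 := by exact_mod_cast hkK
      rw [min_eq_left (by omega), min_eq_left (by omega), max_eq_left (by linarith)]
      push_cast; ring
    · rw [min_eq_right (by omega), min_eq_right (by omega), max_eq_right (by push_cast; linarith)]
      push_cast; ring

lemma sup_lookahead (hr : IsLookaheadReward (kernel s₁ a₀) (reward s₀ a₀ K) r)
    (hs₁ : s₁ ≠ s₀) {a₁ : A} (ha₁ : a₁ ≠ a₀) {k : ℕ} (hk : 1 ≤ k) :
    univ.sup' univ_nonempty (fun a => r k s₀ a) = -(min k (K + 1) : ℕ) := by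
  rw [sup'_univ_eq_max_of_eq_off _ ha₁ fun a ha => lookahead_exit hr hs₁ hk ha,
    lookahead_stay hr hs₁ ha₁ hk]
  rcases le_or_gt k (K + 1) with hkK | hkK
  · have : (k : ℝ) ≤ K + 1 := by exact_mod_cast hkK
    rw [min_eq_left (by omega), min_eq_left hkK, max_eq_left (by linarith)]
  · rw [min_eq_right (by omega), min_eq_right (by omega), max_eq_right (by push_cast; linarith)]
    push_cast; ring

lemma greedy_stays (hr : IsLookaheadReward (kernel s₁ a₀) (reward s₀ a₀ K) r)
    (hs₁ : s₁ ≠ s₀) {a₁ : A} (ha₁ : a₁ ≠ a₀) {m : ℕ} (hm : 1 ≤ m) (hmK : m ≤ K) {a : A}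
    (ha : r m s₀ a₀ ≤ r m s₀ a) : a = a₀ := by
  by_contra hne
  rw [lookahead_stay hr hs₁ ha₁ hm, lookahead_exit hr hs₁ hm hne, min_eq_left (by omega)] at ha
  have : (m : ℝ) ≤ K := by exact_mod_cast hmK
  linarith

end StayOrExit

open StayOrExit in
theorem k_step_greedy_linear_gap_general
    (T K : ℕ) (hK : 1 ≤ K) (hKT : K < T)
    {S A : Type} [Fintype S] [Fintype A] [Nonempty A]
    (hS : 2 ≤ Fintype.card S) (hA : 2 ≤ Fintype.card A) :
    ∃ (p : A → S → S → ℝ) (R : S → A → ℝ) (s : S),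
      (∀ a s₁ s₂, 0 ≤ p a s₁ s₂) ∧
      (∀ a s₁, ∑ s₂, p a s₁ s₂ = 1) ∧
      (∀ s₁ a, R s₁ a ∈ Set.Icc (-(K + 1 : ℝ)) 0) ∧
      (∀ (Vstar : ℕ → S → ℝ) (Qstar : ℕ → S → A → ℝ) (r : ℕ → S → A → ℝ)
         (b : ℕ → S → A) (VKg : ℕ → S → ℝ),
        -- optimal value functions, by backward recursion
        (∀ s₁, Vstar (T + 1) s₁ = 0) →
        (∀ h ≤ T, ∀ s₁ a,
          Qstar h s₁ a = R s₁ a + ∑ s₂, p a s₁ s₂ * Vstar (h + 1) s₂) →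
        (∀ h ≤ T, ∀ s₁,
          Vstar h s₁ = Finset.univ.sup' Finset.univ_nonempty (fun a => Qstar h s₁ a)) →
        -- K-step lookahead reward, by recursion
        (∀ s₁ a, r 1 s₁ a = R s₁ a) →
        (∀ k, 1 ≤ k → ∀ s₁ a,
          r (k + 1) s₁ a = R s₁ a +
            ∑ s₂, p a s₁ s₂ * Finset.univ.sup' Finset.univ_nonempty (fun a' => r k s₂ a')) →
        -- `b h s₁` is any maximizer of `a ↦ r^{min(T−h+1,K)}(s₁,a)`
        (∀ h ≤ T, ∀ s₁ a,
          r (min (T - h + 1) K) s₁ a ≤ r (min (T - h + 1) K) s₁ (b h s₁)) →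
        -- K-step lookahead greedy value function, by backward recursion
        (∀ s₁, VKg (T + 1) s₁ = 0) →
        (∀ h ≤ T, ∀ s₁,
          VKg h s₁ = R s₁ (b h s₁) + ∑ s₂, p (b h s₁) s₁ s₂ * VKg (h + 1) s₂) →
        Vstar 0 s - VKg 0 s = (T : ℝ) - (K : ℝ)) := by
  classical
  obtain ⟨s₀, s₁, hs⟩ := Fintype.exists_pair_of_one_lt_card (show 1 < Fintype.card S by omega)
  obtain ⟨a₀, a₁, ha⟩ := Fintype.exists_pair_of_one_lt_card (show 1 < Fintype.card A by omega)
  refine ⟨kernel s₁ a₀, reward s₀ a₀ K, s₀, detKernel_nonneg _, sum_detKernel _,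
    reward_mem_Icc s₀ a₀ K, ?_⟩
  intro Vstar Qstar r b VKg hV₀ hQ hV hr₁ hrk hb hG₀ hG
  have hr : IsLookaheadReward (kernel s₁ a₀) (reward s₀ a₀ K) r := ⟨hr₁, hrk⟩
  have hopt : Vstar 0 s₀ = -(K + 1) := by
    rw [hV 0 (Nat.zero_le _), optimalQ_eq_lookahead hr hV₀ hQ hV 0 (Nat.zero_le _),
      sup_lookahead hr hs.symm ha.symm (by omega), min_eq_right (by omega)]
    push_cast; ring
  have hstay : ∀ h ≤ T, b h s₀ = a₀ := fun h hh =>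
    greedy_stays hr hs.symm ha.symm (by omega) (min_le_right _ _) (hb h hh s₀ a₀)
  have hgreedy := policyValue_eq_of_selfLoop _ _ (sum_kernel_stay_mul s₁ a₀ s₀) hstay (hG₀ s₀)
    (fun h hh => hG h hh s₀) 0 (Nat.zero_le _)
  rw [hopt, hgreedy]
  simp only [reward, Nat.sub_zero]
  push_cast; ring

/-- Theorem 3.2: Linear optimality gap of K-step lookahead greedy.
For every `T, K` with `1 ≤ K < T` and every pair of finite sets `S, A` with
`|S| ≥ 2` and `|A| ≥ 2`, there exist a transition kernel `p` (nonnegative, rows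
summing to 1), a reward function `R` taking values in `[−(K+1), 0]`, and a state
`s` such that every K-step lookahead greedy value function `V^{K,g}` (for any
choice of maximizing actions) satisfies `V*_0(s) − V^{K,g}_0(s) = T − K`. -/
theorem k_step_greedy_linear_gap
    (T K : ℕ) (hK : 1 ≤ K) (hKT : K < T)
    {S A : Type} [Fintype S] [Fintype A] [Nonempty S] [Nonempty A]
    (hS : 2 ≤ Fintype.card S) (hA : 2 ≤ Fintype.card A) :
    ∃ (p : A → S → S → ℝ) (R : S → A → ℝ) (s : S),
      (∀ a s₁ s₂, 0 ≤ p a s₁ s₂) ∧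
      (∀ a s₁, ∑ s₂, p a s₁ s₂ = 1) ∧
      (∀ s₁ a, R s₁ a ∈ Set.Icc (-(K + 1 : ℝ)) 0) ∧
      (∀ (Vstar : ℕ → S → ℝ) (Qstar : ℕ → S → A → ℝ) (r : ℕ → S → A → ℝ)
         (b : ℕ → S → A) (VKg : ℕ → S → ℝ),
        -- optimal value functions, by backward recursion
        (∀ s₁, Vstar (T + 1) s₁ = 0) →
        (∀ h ≤ T, ∀ s₁ a,
          Qstar h s₁ a = R s₁ a + ∑ s₂, p a s₁ s₂ * Vstar (h + 1) s₂) →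
        (∀ h ≤ T, ∀ s₁,
          Vstar h s₁ = Finset.univ.sup' Finset.univ_nonempty (fun a => Qstar h s₁ a)) →
        -- K-step lookahead reward, by recursion
        (∀ s₁ a, r 1 s₁ a = R s₁ a) →
        (∀ k, 1 ≤ k → ∀ s₁ a,
          r (k + 1) s₁ a = R s₁ a +
            ∑ s₂, p a s₁ s₂ * Finset.univ.sup' Finset.univ_nonempty (fun a' => r k s₂ a')) →
        -- `b h s₁` is any maximizer of `a ↦ r^{min(T−h+1,K)}(s₁,a)`
        (∀ h ≤ T, ∀ s₁ a,
          r (min (T - h + 1) K) s₁ a ≤ r (min (T - h + 1) K) s₁ (b h s₁)) →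
        -- K-step lookahead greedy value function, by backward recursion
        (∀ s₁, VKg (T + 1) s₁ = 0) →
        (∀ h ≤ T, ∀ s₁,
          VKg h s₁ = R s₁ (b h s₁) + ∑ s₂, p (b h s₁) s₁ s₂ * VKg (h + 1) s₂) →
        Vstar 0 s - VKg 0 s = (T : ℝ) - (K : ℝ)) :=
  k_step_greedy_linear_gap_general T K hK hKT hS hA
end

section
/- Lookahead rewards in the explicit lower-bound instance: let 1 ≤ K and consider the MDP with states S = {B, G}, actions A = {a0, a1}, deterministic transitions p a0 B B = 1, p a1 B G = 1, p a0 G G = 1, p a1 G B = 1, and rewards R(B,a0) = −1, R(B,a1) = −(K+1), R(G,a0) = 0, R(G,a1) = −1. Then for every j ≥ 1: r^j(G,a0) = 0 and r^j(B,a1) = −(K+1); and for every 1 ≤ j ≤ K+1: r^j(B,a0) = −j. In particular, for every 1 ≤ j ≤ K, r^j(B,a0) > r^j(B,a1). -/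
/-!
Both actions are deterministic: `a0` stays and `a1` switches state, i.e. the successor of `s`
under `a` is `s + a` in `Fin 2`. The recursion therefore reads
`r^{k+1}(s, a) = R(s, a) + max_{a'} r^k(s + a, a')`, and it is solved in closed form:
`G` is absorbing at value `0`, so `r^k(B, a1) = -(K + 1)`, while
`r^k(B, a0) = r^k(G, a1) = -min(k, K + 2)`, because waiting in `B` costs `1` per step until
switching to `G`, at cost `K + 1`, becomes at least as good.
-/

open Finset

theorem Fin.univ_sup'_two {α : Type*} [LinearOrder α] (f : Fin 2 → α) :
    univ.sup' univ_nonempty f = max (f 0) (f 1) := by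
  refine le_antisymm (sup'_le _ _ fun i _ => ?_)
    (max_le (le_sup' f (mem_univ 0)) (le_sup' f (mem_univ 1)))
  fin_cases i <;> simp

theorem Fin.sum_mul_eq_of_sum_eq_one {R : Type*} [Ring R] {w : Fin 2 → R} (hw : ∑ j, w j = 1)
    {i : Fin 2} (hi : w i = 1) (v : Fin 2 → R) : ∑ j, w j * v j = v i := by
  rw [Fin.sum_univ_two] at hw ⊢
  fin_cases i
  · have : w 1 = 0 := add_eq_left.mp (hi ▸ hw)
    simp_all
  · have : w 0 = 0 := add_eq_right.mp (hi ▸ hw)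
    simp_all

def lowerBoundReward (K : ℕ) : Fin 2 → Fin 2 → ℝ :=
  ![![-1, -(K + 1)], ![0, -1]]

def lowerBoundLookahead (K k : ℕ) : Fin 2 → Fin 2 → ℝ :=
  ![![-min (k : ℝ) (K + 2), -(K + 1)], ![0, -min (k : ℝ) (K + 2)]]

theorem eq_lowerBoundLookahead {K : ℕ} {r : ℕ → Fin 2 → Fin 2 → ℝ}
    (h_one : r 1 = lowerBoundReward K)
    (h_succ : ∀ k, 1 ≤ k → ∀ s a,
      r (k + 1) s a = lowerBoundReward K s a + max (r k (s + a) 0) (r k (s + a) 1))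
    {k : ℕ} (hk : 1 ≤ k) : r k = lowerBoundLookahead K k := by
  induction k, hk using Nat.le_induction with
  | base =>
    rw [h_one]
    ext s a
    fin_cases s <;> fin_cases a <;>
      simp only [lowerBoundReward, lowerBoundLookahead, Fin.zero_eta, Fin.mk_one, Fin.isValue,
        Matrix.cons_val', Matrix.cons_val_zero, Matrix.cons_val_one, Matrix.cons_val_fin_one,
        Nat.cast_one] <;> grind
  | succ k hk ih =>
    ext s a
    rw [h_succ k hk, ih]
    fin_cases s <;> fin_cases a <;>
      simp only [lowerBoundReward, lowerBoundLookahead, Fin.zero_eta, Fin.mk_one, Fin.reduceAdd,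
        Fin.isValue, Matrix.cons_val', Matrix.cons_val_zero, Matrix.cons_val_one,
        Matrix.cons_val_fin_one, Nat.cast_add, Nat.cast_one] <;> grind

theorem lower_bound_instance_lookahead_rewards_general
    (K : ℕ)
    (p : Fin 2 → Fin 2 → Fin 2 → ℝ) (R : Fin 2 → Fin 2 → ℝ)
    (hp_sum : ∀ a s, ∑ s', p a s s' = 1)
    -- deterministic transitions (B = 0, G = 1, a0 = 0, a1 = 1)
    (hpBB : p 0 0 0 = 1) (hpBG : p 1 0 1 = 1) (hpGG : p 0 1 1 = 1) (hpGB : p 1 1 0 = 1)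
    -- rewards
    (hRB0 : R 0 0 = -1) (hRB1 : R 0 1 = -(K + 1 : ℝ))
    (hRG0 : R 1 0 = 0) (hRG1 : R 1 1 = -1)
    (r : ℕ → Fin 2 → Fin 2 → ℝ)
    -- K-step lookahead reward, by recursion
    (hr_one : ∀ s a, r 1 s a = R s a)
    (hr_succ : ∀ k, 1 ≤ k → ∀ s a,
      r (k + 1) s a = R s a +
        ∑ s', p a s s' * Finset.univ.sup' Finset.univ_nonempty (fun a' => r k s' a')) :
    (∀ j, 1 ≤ j → r j 1 0 = 0 ∧ r j 0 1 = -(K + 1 : ℝ)) ∧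
    (∀ j, 1 ≤ j → j ≤ K + 1 → r j 0 0 = -(j : ℝ)) ∧
    (∀ j, 1 ≤ j → j ≤ K → r j 0 1 < r j 0 0) := by
  have hp_succ : ∀ a s, p a s (s + a) = 1 := by
    intro a s
    fin_cases a <;> fin_cases s <;> assumption
  have hR : R = lowerBoundReward K := by
    ext s a
    fin_cases s <;> fin_cases a <;> simp [lowerBoundReward, *]
  have hr : ∀ j, 1 ≤ j → r j = lowerBoundLookahead K j := fun j =>
    eq_lowerBoundLookahead (funext₂ fun s a => by rw [hr_one, hR]) fun k hk s a => by
      rw [hr_succ k hk, hR, Fin.sum_mul_eq_of_sum_eq_one (hp_sum a s) (hp_succ a s),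
        Fin.univ_sup'_two]
  refine ⟨fun j hj => ?_, fun j hj hjK => ?_, fun j hj hjK => ?_⟩ <;> rw [hr j hj]
  · exact ⟨rfl, rfl⟩
  · show -min (j : ℝ) (K + 2) = -j
    rw [min_eq_left (by exact_mod_cast Nat.le_succ_of_le hjK)]
  · show -(K + 1 : ℝ) < -min (j : ℝ) (K + 2)
    have : (j : ℝ) ≤ K := by exact_mod_cast hjK
    linarith [min_le_left (j : ℝ) (K + 2)]

/-- Lookahead rewards in the explicit lower-bound instance with states
`{B, G} = {0, 1}`, actions `{a0, a1} = {0, 1}`, deterministic transitions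
`p a0 B B = 1, p a1 B G = 1, p a0 G G = 1, p a1 G B = 1`, and rewards
`R(B,a0) = −1, R(B,a1) = −(K+1), R(G,a0) = 0, R(G,a1) = −1`.  Then for every
`j ≥ 1`: `r^j(G,a0) = 0` and `r^j(B,a1) = −(K+1)`; for every `1 ≤ j ≤ K+1`:
`r^j(B,a0) = −j`; in particular, for every `1 ≤ j ≤ K`, `r^j(B,a0) > r^j(B,a1)`. -/
theorem lower_bound_instance_lookahead_rewards
    (K : ℕ) (hK : 1 ≤ K)
    (p : Fin 2 → Fin 2 → Fin 2 → ℝ) (R : Fin 2 → Fin 2 → ℝ)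
    (hp_nonneg : ∀ a s s', 0 ≤ p a s s')
    (hp_sum : ∀ a s, ∑ s', p a s s' = 1)
    -- deterministic transitions (B = 0, G = 1, a0 = 0, a1 = 1)
    (hpBB : p 0 0 0 = 1) (hpBG : p 1 0 1 = 1) (hpGG : p 0 1 1 = 1) (hpGB : p 1 1 0 = 1)
    -- rewards
    (hRB0 : R 0 0 = -1) (hRB1 : R 0 1 = -(K + 1 : ℝ))
    (hRG0 : R 1 0 = 0) (hRG1 : R 1 1 = -1)
    (r : ℕ → Fin 2 → Fin 2 → ℝ)
    -- K-step lookahead reward, by recursion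
    (hr_one : ∀ s a, r 1 s a = R s a)
    (hr_succ : ∀ k, 1 ≤ k → ∀ s a,
      r (k + 1) s a = R s a +
        ∑ s', p a s s' * Finset.univ.sup' Finset.univ_nonempty (fun a' => r k s' a')) :
    (∀ j, 1 ≤ j → r j 1 0 = 0 ∧ r j 0 1 = -(K + 1 : ℝ)) ∧
    (∀ j, 1 ≤ j → j ≤ K + 1 → r j 0 0 = -(j : ℝ)) ∧
    (∀ j, 1 ≤ j → j ≤ K → r j 0 1 < r j 0 0) :=
  lower_bound_instance_lookahead_rewards_general K p R hp_sum hpBB hpBG hpGG hpGB hRB0 hRB1 hRG0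
    hRG1 r hr_one hr_succ
end

section
/- Sample-size threshold inequality: for every real Δ with 0 < Δ ≤ 1/2, setting u = (12/Δ²)·(log(e/Δ⁶) + log(log(1/Δ⁶))), one has u ≥ e and 3·log(u)/u ≤ Δ², i.e. √(3·log(u)/u) ≤ Δ. -/
/-!
Write `L = log (1/Δ⁶) ≥ 1` and `S = 1 + L + log L`, so that `u = 12 S / Δ²`. Then `Δ² u = 12 S`,
while `log u = log 12 + log (1/Δ²) + log S ≤ 3 + S + (S - 1) = 2 S + 2 ≤ 4 S`, hence `3 log u ≤ Δ² u`.
-/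

open Real

lemma log_twelve_lt_three : log 12 < 3 := by
  have hexp3 : exp 3 = exp 1 ^ 3 := by rw [← exp_nat_mul]; norm_num
  rw [log_lt_iff_lt_exp (by norm_num), hexp3]
  have : (2.7 : ℝ) < exp 1 := exp_one_gt_d9.trans' (by norm_num)
  nlinarith [pow_lt_pow_left₀ this (by norm_num) three_ne_zero]

lemma three_mul_log_div_le_sq {Δ S : ℝ} (hΔ : 0 < Δ) (hS : 1 ≤ S) (hlog : log (1 / Δ ^ 2) ≤ S) :
    3 * log (12 / Δ ^ 2 * S) / (12 / Δ ^ 2 * S) ≤ Δ ^ 2 := by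
  have hSpos : 0 < S := by linarith
  have hlog_u : log (12 / Δ ^ 2 * S) = log 12 + log (1 / Δ ^ 2) + log S := by
    rw [log_mul (by positivity) hSpos.ne', div_eq_mul_one_div, log_mul (by norm_num) (by positivity)]
  have hΔu : Δ ^ 2 * (12 / Δ ^ 2 * S) = 12 * S := by field_simp
  rw [div_le_iff₀ (by positivity), hΔu, hlog_u]
  linarith [log_twelve_lt_three, log_le_sub_one_of_pos hSpos]

lemma one_le_log_one_div_pow_six {Δ : ℝ} (hΔ0 : 0 < Δ) (hΔ : Δ ≤ 1 / 2) :
    1 ≤ log (1 / Δ ^ 6) := by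
  have hpow : Δ ^ 6 ≤ (1 / 2) ^ 6 := pow_le_pow_left₀ hΔ0.le hΔ 6
  have h64 : (64 : ℝ) ≤ 1 / Δ ^ 6 := by
    rw [le_one_div (by norm_num) (by positivity)]
    linarith
  rw [le_log_iff_exp_le (by positivity)]
  linarith [exp_one_lt_d9]

/-- Sample-size threshold inequality: for every real `Δ` with
`0 < Δ ≤ 1/2`, setting `u = (12/Δ²)·(log(e/Δ⁶) + log(log(1/Δ⁶)))`, one has
`u ≥ e` and `3·log(u)/u ≤ Δ²`, i.e. `√(3·log(u)/u) ≤ Δ`. -/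
theorem sample_size_threshold_inequality
    (Δ : ℝ) (hΔ0 : 0 < Δ) (hΔ : Δ ≤ 1 / 2)
    (u : ℝ)
    (hu : u = (12 / Δ ^ 2) *
      (Real.log (Real.exp 1 / Δ ^ 6) + Real.log (Real.log (1 / Δ ^ 6)))) :
    Real.exp 1 ≤ u ∧ 3 * Real.log u / u ≤ Δ ^ 2 ∧
      Real.sqrt (3 * Real.log u / u) ≤ Δ := by
  set L := log (1 / Δ ^ 6)
  have hL : 1 ≤ L := one_le_log_one_div_pow_six hΔ0 hΔ
  have hS : log (exp 1 / Δ ^ 6) + log L = 1 + L + log L := by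
    rw [div_eq_mul_one_div, log_mul (exp_pos 1).ne' (by positivity), log_exp]
  have hsq_le_one : Δ ^ 2 ≤ 1 := pow_le_one₀ hΔ0.le (by linarith)
  have hlog_sq : log (1 / Δ ^ 2) ≤ L :=
    log_le_log (by positivity) (one_div_le_one_div_of_le (by positivity)
      (pow_le_pow_of_le_one hΔ0.le (by linarith) (by norm_num)))
  have hlogL := log_nonneg hL
  have hbound : 3 * log u / u ≤ Δ ^ 2 := by
    rw [hu, hS]
    exact three_mul_log_div_le_sq hΔ0 (by linarith) (by linarith)
  have h12 : 12 ≤ 12 / Δ ^ 2 := by rw [le_div_iff₀ (by positivity)]; nlinarith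
  refine ⟨?_, hbound, ?_⟩
  · rw [hu, hS]
    nlinarith [exp_one_lt_d9]
  · exact (sqrt_le_sqrt hbound).trans (sqrt_sq hΔ0.le).le
end

section
/- Regret (performance-difference) decomposition: consider the finite-horizon interaction model with horizon T, initial state s₀, and two history-dependent policies π = (π_t) and π' = (π'_t). For 0 ≤ t ≤ T and a history H_{t+1} ∈ 𝓗_{t+1}, let W^{π'}_{t+1}(H_{t+1}) denote the expected value of ∑_{k=t+1}^T c_k(s_k,a_k) when the interaction continues from H_{t+1} using π' (defined by backward recursion over the kernels; W^{π'}_{T+1} = 0). For a history H_t with current state s_t, define the per-step regret Regret_t(H_t) = E_{a∼π_t(H_t)}[c_t(s_t,a) + E_{r∼ρ_t(s_t,a), s'∼P(s_t,a)}[W^{π'}_{t+1}(H_t,a,r,s')]] − E_{a∼π'_t(H_t)}[c_t(s_t,a) + E_{r∼ρ_t(s_t,a), s'∼P(s_t,a)}[W^{π'}_{t+1}(H_t,a,r,s')]]. Then the cumulative difference satisfies E_π[∑_{t=0}^T c_t(s_t,a_t)] − E_{π'}[∑_{t=0}^T c_t(s_t,a_t)] = ∑_{t=0}^T E_{H_t∼π}[Regret_t(H_t)],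 where E_π denotes expectation over trajectories generated from s₀ by π, and H_t∼π denotes the law of the length-t history under π. -/
/-! STATEMENT 14: Regret (performance-difference) decomposition for the
finite-horizon interaction model with history-dependent policies. -/

/-- A history: the list of past `(state, action, reward)` triples (oldest first),
together with the current state. -/
abbrev Hist (S A : Type) : Type := List (S × A × ℝ) × S

/-- Expectation of a real-valued function under a probability mass function. -/
noncomputable def pmfExp {α : Type} (q : PMF α) (f : α → ℝ) : ℝ :=
  ∑' x, (q x).toReal * f x

/-- The law of the length-`t` history generated from the initial state `s₀` by the
history-dependent policy `π`, with transition kernel `P` and reward-observation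
kernels `ρ`. -/
noncomputable def histLaw {S A : Type} (P : S → A → PMF S) (ρ : ℕ → S → A → PMF ℝ)
    (π : ℕ → Hist S A → PMF A) (s₀ : S) : ℕ → PMF (Hist S A)
  | 0 => PMF.pure ([], s₀)
  | t + 1 => (histLaw P ρ π s₀ t).bind fun H =>
      (π t H).bind fun a =>
        (ρ t H.2 a).bind fun r =>
          (P H.2 a).map fun s' => (H.1 ++ [(H.2, a, r)], s')

/-- The cumulative cost `∑_t c_t(s_t, a_t)` along a recorded list of
`(state, action, reward)` triples, starting the time count at `t`. -/
def costSum {S A : Type} (c : ℕ → S → A → ℝ) : ℕ → List (S × A × ℝ) → ℝ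
  | _, [] => 0
  | t, (s, a, _) :: rest => c t s a + costSum c (t + 1) rest

/-- `futureW P ρ c π' n H` is `W^{π'}_{t}(H)`, the expected value of
`∑_{k=t}^{T} c_k(s_k,a_k)` when the interaction continues from the history `H`
(of length `t = T + 1 − n`, i.e. with `n` decision steps remaining) using the
policy `π'`; it is defined by backward recursion with `W^{π'}_{T+1} = 0`. -/
noncomputable def futureW {S A : Type} (P : S → A → PMF S) (ρ : ℕ → S → A → PMF ℝ)
    (c : ℕ → S → A → ℝ) (π' : ℕ → Hist S A → PMF A) : ℕ → Hist S A → ℝ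
  | 0, _ => 0
  | n + 1, H =>
      pmfExp (π' H.1.length H) fun a =>
        c H.1.length H.2 a +
          pmfExp (ρ H.1.length H.2 a) fun r =>
            pmfExp (P H.2 a) fun s' =>
              futureW P ρ c π' n (H.1 ++ [(H.2, a, r)], s')

/-- The per-step regret `Regret_t(H_t)` of policy `π` against policy `π'` at a
history `H` of length `t`, for horizon `T`:  the difference of
`E_{a}[c_t(s_t,a) + E_{r,s'}[W^{π'}_{t+1}(H,a,r,s')]]` when `a` is drawn from
`π_t(H)` versus from `π'_t(H)`. -/
noncomputable def stepRegret {S A : Type} (P : S → A → PMF S) (ρ : ℕ → S → A → PMF ℝ)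
    (c : ℕ → S → A → ℝ) (π π' : ℕ → Hist S A → PMF A) (T t : ℕ) (H : Hist S A) : ℝ :=
  (pmfExp (π t H) fun a =>
      c t H.2 a +
        pmfExp (ρ t H.2 a) fun r =>
          pmfExp (P H.2 a) fun s' =>
            futureW P ρ c π' (T - t) (H.1 ++ [(H.2, a, r)], s')) -
  (pmfExp (π' t H) fun a =>
      c t H.2 a +
        pmfExp (ρ t H.2 a) fun r =>
          pmfExp (P H.2 a) fun s' =>
            futureW P ρ c π' (T - t) (H.1 ++ [(H.2, a, r)], s'))


/-! Telescoping in the time `u` at which one switches from `π` to `π'`: let `V_u` be the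
expectation, over the length-`u` history `H_u` drawn under `π`, of the cost incurred so far plus
`W^{π'}_u(H_u)`. Then `V_{T+1}` is the expected cost of `π`, `V_0 = W^{π'}_0(s₀)` does not
depend on `π`, and `V_{u+1} - V_u = E[Regret_u(H_u)]`, since from `H_u` the two quantities differ
only in whether `a_u` is drawn from `π_u` or from `π'_u`. For `π = π'` all regrets vanish, so
`V_0` is also the expected cost of `π'`.

Every exchange of summations is justified by absolute convergence: a history in the support of
the law of `H_t` has length exactly `t`, and every quantity evaluated on it is then bounded by the
finite sum of the `|c_k(s, a)|` over the times `k` it involves. -/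
section PMFExpectation

variable {α β : Type}

theorem PMF.hasSum_toReal (q : PMF α) : HasSum (fun y => (q y).toReal) 1 := by
  have h := ENNReal.hasSum_toReal (q.tsum_coe ▸ ENNReal.one_ne_top)
  rwa [← ENNReal.tsum_toReal_eq q.apply_ne_top, q.tsum_coe, ENNReal.toReal_one] at h

theorem PMF.norm_toReal_mul_le (q : PMF α) {g : α → ℝ} {C : ℝ}
    (hg : ∀ y ∈ q.support, |g y| ≤ C) (y : α) :
    ‖(q y).toReal * g y‖ ≤ C * (q y).toReal := by
  by_cases hy : q y = 0
  · simp [hy]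
  · rw [Real.norm_eq_abs, abs_mul, ENNReal.abs_toReal, mul_comm]
    exact mul_le_mul_of_nonneg_right (hg y hy) ENNReal.toReal_nonneg

theorem PMF.summable_toReal_mul (q : PMF α) {g : α → ℝ} {C : ℝ}
    (hg : ∀ y ∈ q.support, |g y| ≤ C) : Summable fun y => (q y).toReal * g y :=
  .of_norm_bounded (q.hasSum_toReal.mul_left C).summable (q.norm_toReal_mul_le hg)

theorem abs_pmfExp_le (q : PMF α) {g : α → ℝ} {C : ℝ}
    (hg : ∀ y ∈ q.support, |g y| ≤ C) : |pmfExp q g| ≤ C := by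
  simpa [pmfExp] using tsum_of_norm_bounded (q.hasSum_toReal.mul_left C) (q.norm_toReal_mul_le hg)

theorem pmfExp_congr (q : PMF α) {f g : α → ℝ} (h : ∀ y ∈ q.support, f y = g y) :
    pmfExp q f = pmfExp q g := by
  refine tsum_congr fun y => ?_
  by_cases hy : q y = 0
  · simp [hy]
  · rw [h y hy]

@[simp]
theorem pmfExp_const (q : PMF α) (k : ℝ) : pmfExp q (fun _ => k) = k := by
  simp only [pmfExp, tsum_mul_right, q.hasSum_toReal.tsum_eq, one_mul]

@[simp]
theorem pmfExp_zero (q : PMF α) : pmfExp q 0 = 0 :=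
  pmfExp_const q 0

theorem pmfExp_add (q : PMF α) {f g : α → ℝ} {C D : ℝ}
    (hf : ∀ y ∈ q.support, |f y| ≤ C) (hg : ∀ y ∈ q.support, |g y| ≤ D) :
    pmfExp q (fun y => f y + g y) = pmfExp q f + pmfExp q g := by
  simp only [pmfExp, mul_add]
  exact (q.summable_toReal_mul hf).tsum_add (q.summable_toReal_mul hg)

theorem pmfExp_const_add (q : PMF α) (k : ℝ) {g : α → ℝ} {C : ℝ}
    (hg : ∀ y ∈ q.support, |g y| ≤ C) :
    pmfExp q (fun y => k + g y) = k + pmfExp q g := by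
  rw [pmfExp_add q (fun _ _ => le_refl |k|) hg, pmfExp_const]

theorem pmfExp_pure (x : α) (g : α → ℝ) : pmfExp (PMF.pure x) g = g x := by
  rw [pmfExp, tsum_eq_single x fun y hy => by simp [PMF.pure_apply, hy]]
  simp

theorem pmfExp_bind (p : PMF α) (f : α → PMF β) {g : β → ℝ} {C : ℝ}
    (hg : ∀ y ∈ (p.bind f).support, |g y| ≤ C) :
    pmfExp (p.bind f) g = pmfExp p fun x => pmfExp (f x) g := by
  set F : α → β → ℝ := fun x y => (p x).toReal * ((f x y).toReal * g y)
  have hjoint : ∑' z : α × β, p z.1 * f z.1 z.2 ≠ ⊤ := by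
    rw [ENNReal.tsum_prod (f := fun x y => p x * f x y)]
    simp [ENNReal.tsum_mul_left]
  have hF : Summable (Function.uncurry F) := by
    refine .of_norm_bounded ((ENNReal.summable_toReal hjoint).mul_left C) fun z => ?_
    by_cases hz : p z.1 * f z.1 z.2 = 0
    · simp [Function.uncurry, F, ← mul_assoc, ← ENNReal.toReal_mul, hz]
    · have hy : z.2 ∈ (p.bind f).support :=
        (PMF.mem_support_bind_iff _ _ _).2
          ⟨z.1, left_ne_zero_of_mul hz, right_ne_zero_of_mul hz⟩
      simp only [Function.uncurry, F, ← mul_assoc, ← ENNReal.toReal_mul, norm_mul,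
        Real.norm_eq_abs, ENNReal.abs_toReal]
      rw [mul_comm C]
      exact mul_le_mul_of_nonneg_left (hg _ hy) ENNReal.toReal_nonneg
  calc pmfExp (p.bind f) g = ∑' y, ∑' x, F x y := by
        refine tsum_congr fun y => ?_
        rw [PMF.bind_apply, ENNReal.tsum_toReal_eq fun x => ENNReal.mul_ne_top (p.apply_ne_top x)
          (f x |>.apply_ne_top y), ← tsum_mul_right]
        simp only [F, ENNReal.toReal_mul, mul_assoc]
    _ = ∑' x, ∑' y, F x y := hF.tsum_comm
    _ = pmfExp p fun x => pmfExp (f x) g := tsum_congr fun x => tsum_mul_left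

theorem pmfExp_map (p : PMF α) (h : α → β) {g : β → ℝ} {C : ℝ}
    (hg : ∀ y ∈ (p.map h).support, |g y| ≤ C) :
    pmfExp (p.map h) g = pmfExp p (g ∘ h) := by
  rw [← PMF.bind_pure_comp, pmfExp_bind p _ hg]
  exact pmfExp_congr p fun x _ => pmfExp_pure (h x) g

end PMFExpectation

section Model

variable {S A : Type} {P : S → A → PMF S} {ρ : ℕ → S → A → PMF ℝ}
  {c : ℕ → S → A → ℝ} {σ π' : ℕ → Hist S A → PMF A} {s₀ : S}

variable (P ρ σ) in
noncomputable def histStep (t : ℕ) (H : Hist S A) : PMF (Hist S A) :=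
  (σ t H).bind fun a =>
    (ρ t H.2 a).bind fun r =>
      (P H.2 a).map fun s' => (H.1 ++ [(H.2, a, r)], s')

variable (P ρ c π') in
/-- The bracket in `Regret_t`: the expected cost of taking `a` at the length-`t` history `H` and
then following `π'` for the `n` remaining steps. -/
noncomputable def actionValue (n t : ℕ) (H : Hist S A) (a : A) : ℝ :=
  c t H.2 a +
    pmfExp (ρ t H.2 a) fun r =>
      pmfExp (P H.2 a) fun s' => futureW P ρ c π' n (H.1 ++ [(H.2, a, r)], s')

theorem histLaw_succ (t : ℕ) :
    histLaw P ρ σ s₀ (t + 1) = (histLaw P ρ σ s₀ t).bind (histStep P ρ σ t) := rfl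

theorem futureW_succ (n : ℕ) (H : Hist S A) :
    futureW P ρ c π' (n + 1) H =
      pmfExp (π' H.1.length H) (actionValue P ρ c π' n H.1.length H) :=
  rfl

theorem stepRegret_eq (T t : ℕ) (H : Hist S A) :
    stepRegret P ρ c σ π' T t H =
      pmfExp (σ t H) (actionValue P ρ c π' (T - t) t H) -
        pmfExp (π' t H) (actionValue P ρ c π' (T - t) t H) :=
  rfl

theorem stepRegret_self (T t : ℕ) : stepRegret P ρ c π' π' T t = 0 :=
  funext fun _ => sub_self _

theorem length_of_mem_support_histStep {t : ℕ} {H H' : Hist S A}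
    (h : H' ∈ (histStep P ρ σ t H).support) : H'.1.length = H.1.length + 1 := by
  simp only [histStep, PMF.mem_support_bind_iff, PMF.mem_support_map_iff] at h
  obtain ⟨a, -, r, -, s', -, rfl⟩ := h
  simp

theorem length_of_mem_support_histLaw :
    ∀ {t : ℕ} {H : Hist S A}, H ∈ (histLaw P ρ σ s₀ t).support → H.1.length = t
  | 0, H, h => by
    rw [histLaw, PMF.mem_support_pure_iff] at h
    simp [h]
  | t + 1, H, h => by
    obtain ⟨H₀, h₀, h⟩ := (PMF.mem_support_bind_iff _ _ _).1 h
    rw [length_of_mem_support_histStep h, length_of_mem_support_histLaw h₀]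

theorem pmfExp_histStep {t : ℕ} {H : Hist S A} {g : Hist S A → ℝ} {C : ℝ}
    (hg : ∀ H' ∈ (histStep P ρ σ t H).support, |g H'| ≤ C) :
    pmfExp (histStep P ρ σ t H) g =
      pmfExp (σ t H) fun a =>
        pmfExp (ρ t H.2 a) fun r =>
          pmfExp (P H.2 a) fun s' => g (H.1 ++ [(H.2, a, r)], s') := by
  rw [histStep, pmfExp_bind _ _ hg]
  refine pmfExp_congr _ fun a ha => ?_
  rw [pmfExp_bind _ _ fun H' h => hg H' ((PMF.mem_support_bind_iff _ _ _).2 ⟨a, ha, h⟩)]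
  refine pmfExp_congr _ fun r hr => pmfExp_map _ _ fun H' h => hg H' ?_
  exact (PMF.mem_support_bind_iff _ _ _).2
    ⟨a, ha, (PMF.mem_support_bind_iff _ _ _).2 ⟨r, hr, h⟩⟩

theorem costSum_append_singleton (s : S) (a : A) (r : ℝ) :
    ∀ (t : ℕ) (l : List (S × A × ℝ)),
      costSum c t (l ++ [(s, a, r)]) = costSum c t l + c (t + l.length) s a
  | t, [] => by simp [costSum]
  | t, (s', a', r') :: l => by
    simp only [List.cons_append, costSum, costSum_append_singleton s a r (t + 1) l,
      List.length_cons, add_assoc, Nat.add_comm 1]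

end Model

section FiniteModel

variable {S A : Type} [Fintype S] [Fintype A] {P : S → A → PMF S}
  {ρ : ℕ → S → A → PMF ℝ} {c : ℕ → S → A → ℝ} {σ π' : ℕ → Hist S A → PMF A}
  {s₀ : S}

variable (c) in
noncomputable def costBound (t n : ℕ) : ℝ :=
  ∑ k ∈ Finset.range n, ∑ s, ∑ a, |c (t + k) s a|

theorem abs_add_le_costBound_succ {t n : ℕ} (s : S) (a : A) {x : ℝ}
    (hx : |x| ≤ costBound c (t + 1) n) : |c t s a + x| ≤ costBound c t (n + 1) := by
  have hc : |c t s a| ≤ ∑ s, ∑ a, |c t s a| :=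
    (Finset.single_le_sum (fun a _ => abs_nonneg (c t s a)) (Finset.mem_univ a)).trans
      (Finset.single_le_sum (f := fun s => ∑ a, |c t s a|)
        (fun _ _ => Finset.sum_nonneg fun _ _ => abs_nonneg _) (Finset.mem_univ s))
  rw [costBound, Finset.sum_range_succ', add_zero, add_comm _ (∑ s, ∑ a, |c t s a|)]
  refine (abs_add_le _ _).trans (add_le_add hc (hx.trans_eq ?_))
  exact Finset.sum_congr rfl fun k _ => by rw [Nat.add_right_comm, Nat.add_assoc]

theorem abs_costSum_le :
    ∀ (t : ℕ) (l : List (S × A × ℝ)), |costSum c t l| ≤ costBound c t l.length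
  | t, [] => by simp [costSum, costBound]
  | t, (s, a, _) :: l => abs_add_le_costBound_succ s a (abs_costSum_le (t + 1) l)

theorem abs_futureW_le :
    ∀ (n : ℕ) (H : Hist S A), |futureW P ρ c π' n H| ≤ costBound c H.1.length n
  | 0, _ => by simp [futureW, costBound]
  | n + 1, H => by
    refine abs_pmfExp_le _ fun a _ => abs_add_le_costBound_succ _ _ ?_
    refine abs_pmfExp_le _ fun r _ => abs_pmfExp_le _ fun s' _ => ?_
    simpa using abs_futureW_le n (H.1 ++ [(H.2, a, r)], s')

theorem abs_actionValue_le {n t : ℕ} {H : Hist S A} (hH : H.1.length = t) (a : A) :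
    |actionValue P ρ c π' n t H a| ≤ costBound c t (n + 1) := by
  refine abs_add_le_costBound_succ _ _ ?_
  refine abs_pmfExp_le _ fun r _ => abs_pmfExp_le _ fun s' _ => ?_
  simpa [hH] using abs_futureW_le (P := P) (ρ := ρ) (π' := π') n (H.1 ++ [(H.2, a, r)], s')

theorem abs_costSum_add_futureW_le {n t : ℕ} {H : Hist S A} (hH : H.1.length = t) :
    |costSum c 0 H.1 + futureW P ρ c π' n H| ≤ costBound c 0 t + costBound c t n := by
  subst hH
  exact (abs_add_le _ _).trans (add_le_add (abs_costSum_le 0 H.1) (abs_futureW_le n H))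

theorem abs_stepRegret_le {T t : ℕ} {H : Hist S A} (hH : H.1.length = t) :
    |stepRegret P ρ c σ π' T t H| ≤ 2 * costBound c t (T - t + 1) := by
  rw [stepRegret_eq, two_mul]
  exact (abs_sub _ _).trans (add_le_add (abs_pmfExp_le _ fun a _ => abs_actionValue_le hH a)
    (abs_pmfExp_le _ fun a _ => abs_actionValue_le hH a))

theorem pmfExp_histStep_costSum_add_futureW {n t : ℕ} {H : Hist S A} (hH : H.1.length = t) :
    pmfExp (histStep P ρ σ t H) (fun H' => costSum c 0 H'.1 + futureW P ρ c π' n H') =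
      costSum c 0 H.1 + pmfExp (σ t H) (actionValue P ρ c π' n t H) := by
  have hW : ∀ a r s',
      |futureW P ρ c π' n (H.1 ++ [(H.2, a, r)], s')| ≤ costBound c (t + 1) n :=
    fun a r s' => by simpa [hH] using abs_futureW_le n (H.1 ++ [(H.2, a, r)], s')
  rw [pmfExp_histStep fun H' h => abs_costSum_add_futureW_le
      ((length_of_mem_support_histStep h).trans (congrArg (· + 1) hH)),
    ← pmfExp_const_add _ _ fun a _ => abs_actionValue_le hH a]
  refine pmfExp_congr _ fun a _ => ?_
  have hinner : ∀ r, (pmfExp (P H.2 a) fun s' =>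
      costSum c 0 (H.1 ++ [(H.2, a, r)]) + futureW P ρ c π' n (H.1 ++ [(H.2, a, r)], s')) =
      (costSum c 0 H.1 + c t H.2 a) +
        pmfExp (P H.2 a) fun s' => futureW P ρ c π' n (H.1 ++ [(H.2, a, r)], s') := fun r => by
    rw [costSum_append_singleton, zero_add, hH, pmfExp_const_add _ _ fun s' _ => hW a r s']
  rw [pmfExp_congr _ fun r _ => hinner r,
    pmfExp_const_add _ _ fun r _ => abs_pmfExp_le _ fun s' _ => hW a r s', actionValue, add_assoc]

theorem pmfExp_histLaw_succ_costSum_add_futureW {T t : ℕ} (ht : t ≤ T) :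
    pmfExp (histLaw P ρ σ s₀ (t + 1))
        (fun H => costSum c 0 H.1 + futureW P ρ c π' (T - t) H) =
      pmfExp (histLaw P ρ σ s₀ t)
          (fun H => costSum c 0 H.1 + futureW P ρ c π' (T + 1 - t) H) +
        pmfExp (histLaw P ρ σ s₀ t) (stepRegret P ρ c σ π' T t) := by
  have hW : ∀ H : Hist S A, H.1.length = t →
      futureW P ρ c π' (T + 1 - t) H = pmfExp (π' t H) (actionValue P ρ c π' (T - t) t H) := by
    intro H hH
    rw [show T + 1 - t = T - t + 1 by omega, futureW_succ, hH]
  calc _ = pmfExp (histLaw P ρ σ s₀ t) fun H =>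
          costSum c 0 H.1 + pmfExp (σ t H) (actionValue P ρ c π' (T - t) t H) := by
        have hbound : ∀ H ∈ (histLaw P ρ σ s₀ (t + 1)).support,
            |costSum c 0 H.1 + futureW P ρ c π' (T - t) H| ≤
              costBound c 0 (t + 1) + costBound c (t + 1) (T - t) :=
          fun H h => abs_costSum_add_futureW_le (length_of_mem_support_histLaw h)
        rw [histLaw_succ] at hbound ⊢
        rw [pmfExp_bind _ _ hbound]
        exact pmfExp_congr _ fun H h =>
          pmfExp_histStep_costSum_add_futureW (length_of_mem_support_histLaw h)
    _ = pmfExp (histLaw P ρ σ s₀ t) fun H =>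
          (costSum c 0 H.1 + futureW P ρ c π' (T + 1 - t) H) + stepRegret P ρ c σ π' T t H :=
        pmfExp_congr _ fun H h => by
          rw [hW H (length_of_mem_support_histLaw h), stepRegret_eq]
          ring
    _ = _ := pmfExp_add _ (fun H h => abs_costSum_add_futureW_le (length_of_mem_support_histLaw h))
          fun H h => abs_stepRegret_le (length_of_mem_support_histLaw h)

theorem pmfExp_histLaw_costSum_add_futureW {T : ℕ} :
    ∀ u ≤ T + 1, pmfExp (histLaw P ρ σ s₀ u)
        (fun H => costSum c 0 H.1 + futureW P ρ c π' (T + 1 - u) H) =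
      futureW P ρ c π' (T + 1) ([], s₀) +
        ∑ t ∈ Finset.range u, pmfExp (histLaw P ρ σ s₀ t) (stepRegret P ρ c σ π' T t)
  | 0, _ => by simp [histLaw, pmfExp_pure, costSum]
  | u + 1, hu => by
    rw [show T + 1 - (u + 1) = T - u by omega, pmfExp_histLaw_succ_costSum_add_futureW (by omega),
      pmfExp_histLaw_costSum_add_futureW u (by omega), Finset.sum_range_succ, add_assoc]

variable (P ρ c σ π' s₀) in
theorem pmfExp_histLaw_costSum (T : ℕ) :
    pmfExp (histLaw P ρ σ s₀ (T + 1)) (fun H => costSum c 0 H.1) =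
      futureW P ρ c π' (T + 1) ([], s₀) +
        ∑ t ∈ Finset.range (T + 1),
          pmfExp (histLaw P ρ σ s₀ t) (stepRegret P ρ c σ π' T t) := by
  simpa [futureW] using pmfExp_histLaw_costSum_add_futureW (T + 1) le_rfl

end FiniteModel

theorem regret_decomposition_general
    {S A : Type} [Fintype S] [Fintype A]
    (P : S → A → PMF S) (ρ : ℕ → S → A → PMF ℝ)
    (c : ℕ → S → A → ℝ) (s₀ : S) (T : ℕ)
    (π π' : ℕ → Hist S A → PMF A) :
    pmfExp (histLaw P ρ π s₀ (T + 1)) (fun H => costSum c 0 H.1) -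
        pmfExp (histLaw P ρ π' s₀ (T + 1)) (fun H => costSum c 0 H.1)
      = ∑ t ∈ Finset.range (T + 1),
          pmfExp (histLaw P ρ π s₀ t) (stepRegret P ρ c π π' T t) := by
  rw [pmfExp_histLaw_costSum P ρ c π π' s₀ T, pmfExp_histLaw_costSum P ρ c π' π' s₀ T]
  simp [stepRegret_self]

/-- Regret decomposition:
`E_π[∑_{t=0}^T c_t(s_t,a_t)] − E_{π'}[∑_{t=0}^T c_t(s_t,a_t)]
  = ∑_{t=0}^T E_{H_t ∼ π}[Regret_t(H_t)]`. -/
theorem regret_decomposition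
    {S A : Type} [Fintype S] [Fintype A] [Nonempty S] [Nonempty A]
    (P : S → A → PMF S) (ρ : ℕ → S → A → PMF ℝ)
    (c : ℕ → S → A → ℝ) (s₀ : S) (T : ℕ)
    (π π' : ℕ → Hist S A → PMF A) :
    pmfExp (histLaw P ρ π s₀ (T + 1)) (fun H => costSum c 0 H.1) -
        pmfExp (histLaw P ρ π' s₀ (T + 1)) (fun H => costSum c 0 H.1)
      = ∑ t ∈ Finset.range (T + 1),
          pmfExp (histLaw P ρ π s₀ t) (stepRegret P ρ c π π' T t) :=
  regret_decomposition_general P ρ c s₀ T π π'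
end
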